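/- arXiv:1703.08018 — 9 statements merged into one kernel-verified Lean document; each statement's English description precedes it below -/
import Mathlib

section
/- Let G be a graph and let T be an unweighted leaf root of G. Then every refinement T' of T whose leaf set is also V(G) is an unweighted leaf root of G. -/
open SimpleGraph

namespace LeafPaper

/-- A leaf of a graph: a vertex with exactly one neighbor. -/
def IsLeaf {W : Type} (T : SimpleGraph W) (w : W) : Prop := ∃! u, T.Adj w u

/-- The edge list of the (unique, if `T` is a tree) path between `x` and `y`. -/
noncomputable def treePathEdges {W : Type} (T : SimpleGraph W) (x y : W) :
    List (Sym2 W) := by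
  classical
  exact if h : T.Reachable x y then (Classical.choice h).bypass.edges else []

/-- The weighted distance between `x` and `y` in a tree `T` with edge weighting `f`:
the sum of the weights of the edges on the (unique) path between `x` and `y`. -/
noncomputable def wdist {W : Type} (T : SimpleGraph W) (f : Sym2 W → ℕ) (x y : W) : ℕ :=
  ((treePathEdges T x y).map f).sum

/-- `(T, f)` is a leaf root of `G` with threshold `k`, where `ι` identifies the
vertices of `G` with the leaves of `T`. -/
def IsLeafRoot {V W : Type} (G : SimpleGraph V) (T : SimpleGraph W) (ι : V → W)
    (f : Sym2 W → ℕ) (k : ℕ) : Prop :=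
  T.IsTree ∧ Function.Injective ι ∧ (∀ w : W, IsLeaf T w ↔ w ∈ Set.range ι) ∧
    (∀ e ∈ T.edgeSet, 0 < f e) ∧
    ∀ u v : V, u ≠ v → (G.Adj u v ↔ wdist T f (ι u) (ι v) ≤ k)

/-- An unweighted tree `T` is an unweighted leaf root of `G` if some positive
integer weighting of its edges makes it a leaf root of `G`. -/
def IsUnweightedLeafRoot {V W : Type} (G : SimpleGraph V) (T : SimpleGraph W)
    (ι : V → W) : Prop :=
  ∃ (f : Sym2 W → ℕ) (k : ℕ), IsLeafRoot G T ι f k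

/-- `G` is a leaf power: there are a finite tree `T` whose leaf set is exactly `V(G)`
and a positive threshold `k` such that distinct vertices are adjacent in `G` iff their
tree distance is at most `k`. -/
def IsLeafPower {V : Type} (G : SimpleGraph V) : Prop :=
  ∃ (W : Type) (T : SimpleGraph W) (ι : V → W) (k : ℕ),
    Finite W ∧ T.IsTree ∧ Function.Injective ι ∧
      (∀ w : W, IsLeaf T w ↔ w ∈ Set.range ι) ∧ 0 < k ∧
      ∀ u v : V, u ≠ v → (G.Adj u v ↔ T.dist (ι u) (ι v) ≤ k)

/-- An alternating cycle `(x 0, y 0, x 1, y 1, …)` of `G`: `2c` distinct vertices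
such that `x i y i` is an edge and `y i x (i+1)` is a non-edge (indices mod `c`). -/
def IsAltCycle {V : Type} (G : SimpleGraph V) (c : ℕ) (x y : ZMod c → V) : Prop :=
  2 ≤ c ∧ Function.Injective (Sum.elim x y) ∧
    ∀ i : ZMod c, G.Adj (x i) (y i) ∧ ¬ G.Adj (y i) (x (i + 1))

/-- The weighted tree `(T, f)` satisfies the alternating cycle given by `x, y`
with threshold `k`. -/
def Satisfies {V W : Type} (T : SimpleGraph W) (f : Sym2 W → ℕ) (ι : V → W)
    (c : ℕ) (x y : ZMod c → V) (k : ℕ) : Prop :=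
  ∀ i : ZMod c, wdist T f (ι (x i)) (ι (y i)) ≤ k ∧
    k < wdist T f (ι (y i)) (ι (x (i + 1)))

/-- The unweighted tree `T` can satisfy the alternating cycle given by `x, y`. -/
def CanSatisfy {V W : Type} (T : SimpleGraph W) (ι : V → W) (c : ℕ)
    (x y : ZMod c → V) : Prop :=
  ∃ (f : Sym2 W → ℕ) (k : ℕ), (∀ e ∈ T.edgeSet, 0 < f e) ∧ Satisfies T f ι c x y k

/-- `T` contains the quartet `ab|cd`: the four vertices are distinct leaves of `T` and
the path between `a` and `b` is vertex-disjoint from the path between `c` and `d`. -/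
def ContainsQuartet {W : Type} (T : SimpleGraph W) (a b c d : W) : Prop :=
  IsLeaf T a ∧ IsLeaf T b ∧ IsLeaf T c ∧ IsLeaf T d ∧ a ≠ b ∧ c ≠ d ∧
    ∀ (p : T.Walk a b) (p' : T.Walk c d), p.IsPath → p'.IsPath →
      ∀ w : W, w ∈ p.support → w ∉ p'.support


/-- `T` is obtained from `T'` by contracting edges via the map `φ`: `φ` is surjective,
each fiber induces a connected subgraph of `T'`, and distinct vertices of `T` are
adjacent iff some pair of their preimages is adjacent in `T'`.  In other words, `T'`
is a refinement of `T`. -/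
def IsRefinementVia {W W' : Type} (T' : SimpleGraph W') (T : SimpleGraph W)
    (φ : W' → W) : Prop :=
  Function.Surjective φ ∧
    (∀ a : W, (T'.induce (φ ⁻¹' {a})).Connected) ∧
    ∀ a b : W, a ≠ b → (T.Adj a b ↔ ∃ u v : W', φ u = a ∧ φ v = b ∧ T'.Adj u v)


/- ### Auxiliary lemmas -/

lemma sum_map_le_of_subset {α : Type} (f : α → ℕ) {l₁ l₂ : List α}
    (hd : l₁.Nodup) (hs : l₁ ⊆ l₂) : (l₁.map f).sum ≤ (l₂.map f).sum := by
  have h : (l₁ : Multiset α) ≤ (l₂ : Multiset α) := (hd.subperm hs)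
  have h2 : (l₁ : Multiset α).map f ≤ (l₂ : Multiset α).map f := Multiset.map_le_map h
  obtain ⟨u, hu⟩ := Multiset.le_iff_exists_add.mp h2
  have h3 : ((l₂ : Multiset α).map f).sum = ((l₁ : Multiset α).map f).sum + u.sum := by
    rw [hu, Multiset.sum_add]
  have e1 : (l₁.map f).sum = ((l₁ : Multiset α).map f).sum := by simp
  have e2 : (l₂.map f).sum = ((l₂ : Multiset α).map f).sum := by simp
  rw [e1, e2, h3]
  exact Nat.le_add_right _ _

lemma wdist_eq_of_isPath {W : Type} (T : SimpleGraph W) (hT : T.IsTree) (f : Sym2 W → ℕ)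
    {x y : W} (p : T.Walk x y) (hp : p.IsPath) :
    wdist T f x y = (p.edges.map f).sum := by
  classical
  have hr : T.Reachable x y := ⟨p⟩
  rw [wdist, treePathEdges]
  rw [dif_pos hr]
  have h1 : (Classical.choice hr).bypass = p :=
    (hT.existsUnique_path x y).unique (Classical.choice hr).bypass_isPath hp
  rw [h1]

lemma wdist_le_walk {W : Type} (T : SimpleGraph W) (hT : T.IsTree) (f : Sym2 W → ℕ)
    {x y : W} (w : T.Walk x y) : wdist T f x y ≤ (w.edges.map f).sum := by
  classical
  rw [wdist_eq_of_isPath T hT f w.bypass w.bypass_isPath]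
  exact sum_map_le_of_subset f w.bypass_isPath.edges_nodup w.edges_bypass_subset

lemma push_walk {W W' : Type} (T : SimpleGraph W) (T' : SimpleGraph W') (φ : W' → W)
    (hφ : ∀ u v : W', T'.Adj u v → φ u ≠ φ v → T.Adj (φ u) (φ v))
    (f : Sym2 W → ℕ) (f' : Sym2 W' → ℕ) (N : ℕ)
    (hf2 : ∀ u v : W', φ u ≠ φ v → f' s(u, v) = N * f s(φ u, φ v)) :
    ∀ {u v : W'} (w' : T'.Walk u v), ∃ w₀ : T.Walk (φ u) (φ v),
      N * (w₀.edges.map f).sum ≤ (w'.edges.map f').sum := by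
  intro u v w'
  induction w' with
  | nil => exact ⟨SimpleGraph.Walk.nil, by simp⟩
  | @cons a b c h p ih =>
    obtain ⟨w₀, hw₀⟩ := ih
    by_cases hc : φ a = φ b
    · refine ⟨w₀.copy hc.symm rfl, ?_⟩
      rw [SimpleGraph.Walk.edges_copy, SimpleGraph.Walk.edges_cons]
      simp only [List.map_cons, List.sum_cons]
      exact hw₀.trans (Nat.le_add_left _ _)
    · refine ⟨SimpleGraph.Walk.cons (hφ a b h hc) w₀, ?_⟩
      rw [SimpleGraph.Walk.edges_cons, SimpleGraph.Walk.edges_cons]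
      simp only [List.map_cons, List.sum_cons]
      rw [Nat.mul_add, hf2 a b hc]
      exact Nat.add_le_add_left hw₀ _

lemma intra_walk {W W' : Type} (T' : SimpleGraph W') [Fintype W'] (φ : W' → W)
    (f' : Sym2 W' → ℕ) (hf1 : ∀ u v : W', φ u = φ v → f' s(u, v) ≤ 1)
    {a : W} (hconn : (T'.induce (φ ⁻¹' {a})).Connected)
    {u v : W'} (hu : φ u = a) (hv : φ v = a) :
    ∃ w : T'.Walk u v, (w.edges.map f').sum ≤ Fintype.card W' := by
  classical
  have hu' : u ∈ φ ⁻¹' {a} := hu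
  have hv' : v ∈ φ ⁻¹' {a} := hv
  have hr : (T'.induce (φ ⁻¹' {a})).Reachable ⟨u, hu'⟩ ⟨v, hv'⟩ :=
    hconn.preconnected _ _
  have key : ∀ (x y : (φ ⁻¹' {a} : Set W')) (q : (T'.induce (φ ⁻¹' {a})).Walk x y),
      ∃ w : T'.Walk x.1 y.1, (w.edges.map f').sum ≤ q.length := by
    intro x y q
    induction q with
    | nil => exact ⟨SimpleGraph.Walk.nil, by simp⟩
    | @cons x z y h p ih =>
      obtain ⟨w, hw⟩ := ih
      have hadj : T'.Adj x.1 z.1 := h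
      refine ⟨SimpleGraph.Walk.cons hadj w, ?_⟩
      rw [SimpleGraph.Walk.edges_cons, SimpleGraph.Walk.length_cons]
      simp only [List.map_cons, List.sum_cons]
      have hx : φ x.1 = a := x.2
      have hz : φ z.1 = a := z.2
      have := hf1 x.1 z.1 (hx.trans hz.symm)
      omega
  have : Fintype (φ ⁻¹' {a} : Set W') := Fintype.ofFinite _
  obtain ⟨w, hw⟩ := key _ _ (Classical.choice hr).bypass
  refine ⟨w, hw.trans ?_⟩
  have h1 : (Classical.choice hr).bypass.length < Fintype.card (φ ⁻¹' {a} : Set W') :=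
    (Classical.choice hr).bypass_isPath.length_lt
  have h2 : Fintype.card (φ ⁻¹' {a} : Set W') ≤ Fintype.card W' :=
    Fintype.card_le_of_injective Subtype.val Subtype.val_injective
  omega

lemma lift_walk {W W' : Type} (T : SimpleGraph W) (T' : SimpleGraph W') [Fintype W'] (φ : W' → W)
    (hconn : ∀ a : W, (T'.induce (φ ⁻¹' {a})).Connected)
    (hφ : ∀ a b : W, a ≠ b → T.Adj a b → ∃ u v : W', φ u = a ∧ φ v = b ∧ T'.Adj u v)
    (f : Sym2 W → ℕ) (f' : Sym2 W' → ℕ) (N : ℕ)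
    (hf1 : ∀ u v : W', φ u = φ v → f' s(u, v) ≤ 1)
    (hf2 : ∀ u v : W', φ u ≠ φ v → f' s(u, v) = N * f s(φ u, φ v)) :
    ∀ {a b : W} (w : T.Walk a b) (u v : W'), φ u = a → φ v = b →
      ∃ w' : T'.Walk u v,
        (w'.edges.map f').sum ≤ N * (w.edges.map f).sum + (w.length + 1) * Fintype.card W' := by
  intro a b w
  induction w with
  | nil =>
    intro u v hu hv
    obtain ⟨q, hq⟩ := intra_walk T' φ f' hf1 (hconn _) hu hv
    exact ⟨q, by simpa using hq⟩
  | @cons a c b h p ih =>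
    intro u v hu hv
    obtain ⟨u₀, v₀, hu₀, hv₀, hadj'⟩ := hφ a c h.ne h
    obtain ⟨q, hq⟩ := intra_walk T' φ f' hf1 (hconn a) hu hu₀
    obtain ⟨w₁, hw₁⟩ := ih v₀ v hv₀ hv
    refine ⟨q.append (SimpleGraph.Walk.cons hadj' w₁), ?_⟩
    rw [SimpleGraph.Walk.edges_append, SimpleGraph.Walk.length_cons]
    simp only [List.map_append, List.sum_append, List.map_cons, List.sum_cons,
      SimpleGraph.Walk.edges_cons]
    have he : f' s(u₀, v₀) = N * f s(a, c) := by
      rw [← hu₀, ← hv₀]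
      exact hf2 u₀ v₀ (by rw [hu₀, hv₀]; exact h.ne)
    rw [he]
    have expand : N * (f s(a, c) + (p.edges.map f).sum)
        = N * f s(a, c) + N * (p.edges.map f).sum := Nat.mul_add _ _ _
    have expand2 : (p.length + 1 + 1) * Fintype.card W'
        = (p.length + 1) * Fintype.card W' + Fintype.card W' := Nat.succ_mul _ _
    omega

/-- any refinement of an unweighted leaf root of `G` whose leaf set is
also `V(G)` is again an unweighted leaf root of `G`. -/
theorem stmt_1 {V W W' : Type} [Fintype V] [Fintype W] [Fintype W']
    (G : SimpleGraph V) (T : SimpleGraph W) (T' : SimpleGraph W')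
    (ι : V → W) (ι' : V → W')
    (hroot : IsUnweightedLeafRoot G T ι)
    (hT' : T'.IsTree) (hι' : Function.Injective ι')
    (hleaf' : ∀ w : W', IsLeaf T' w ↔ w ∈ Set.range ι')
    (φ : W' → W) (href : IsRefinementVia T' T φ)
    (hcomm : ∀ v : V, φ (ι' v) = ι v) :
    IsUnweightedLeafRoot G T' ι' := by
  classical
  obtain ⟨f, k, hTtree, hι, hleafT, hfpos, hGadj⟩ := hroot
  obtain ⟨hsurj, hconn, hAdjIff⟩ := href
  set C : ℕ := Fintype.card W * Fintype.card W' with hCdef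
  set N : ℕ := C + 1 with hNdef
  let f' : Sym2 W' → ℕ := Sym2.lift ⟨fun u v => if φ u = φ v then 1 else N * f s(φ u, φ v), by
    intro u v
    rcases eq_or_ne (φ u) (φ v) with h | h
    · simp [h]
    · simp only [if_neg h, if_neg (Ne.symm h)]
      rw [Sym2.eq_swap]⟩
  have hf1 : ∀ u v : W', φ u = φ v → f' s(u, v) ≤ 1 := by
    intro u v h; simp [f', h]
  have hf2 : ∀ u v : W', φ u ≠ φ v → f' s(u, v) = N * f s(φ u, φ v) := by
    intro u v h; simp [f', h]
  have hφ1 : ∀ u v : W', T'.Adj u v → φ u ≠ φ v → T.Adj (φ u) (φ v) :=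
    fun u v h hne => (hAdjIff _ _ hne).mpr ⟨u, v, rfl, rfl, h⟩
  have hφ2 : ∀ a b : W, a ≠ b → T.Adj a b → ∃ u v : W', φ u = a ∧ φ v = b ∧ T'.Adj u v :=
    fun a b hne h => (hAdjIff a b hne).mp h
  refine ⟨f', N * k + C, hT', hι', hleaf', ?_, ?_⟩
  · intro e he
    induction e using Sym2.ind with
    | _ u v =>
      have hadj : T'.Adj u v := he
      rcases eq_or_ne (φ u) (φ v) with h | h
      · simp [f', h]
      · rw [hf2 u v h]
        have hpos : 0 < f s(φ u, φ v) := hfpos _ (hφ1 u v hadj h)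
        have hN : 0 < N := by omega
        exact Nat.mul_pos hN hpos
  · intro u v huv
    rw [hGadj u v huv]
    constructor
    · intro hle
      have hr : T.Reachable (ι u) (ι v) := hTtree.isConnected.preconnected _ _
      set p := (Classical.choice hr).bypass with hp
      have hpsum : (p.edges.map f).sum = wdist T f (ι u) (ι v) :=
        (wdist_eq_of_isPath T hTtree f p (SimpleGraph.Walk.bypass_isPath _)).symm
      obtain ⟨w', hw'⟩ :=
        lift_walk T T' φ hconn hφ2 f f' N hf1 hf2 p (ι' u) (ι' v) (hcomm u) (hcomm v)
      have h1 : wdist T' f' (ι' u) (ι' v) ≤ (w'.edges.map f').sum := wdist_le_walk T' hT' f' w'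
      have hlen : p.length + 1 ≤ Fintype.card W :=
        (SimpleGraph.Walk.bypass_isPath _).length_lt
      have h2 : (p.length + 1) * Fintype.card W' ≤ C := by
        rw [hCdef]; exact Nat.mul_le_mul_right _ hlen
      have h3 : N * (p.edges.map f).sum ≤ N * k := by
        rw [hpsum]; exact Nat.mul_le_mul_left _ hle
      linarith
    · intro hle
      by_contra hgt
      push_neg at hgt
      have hr' : T'.Reachable (ι' u) (ι' v) := hT'.isConnected.preconnected _ _
      set p' := (Classical.choice hr').bypass with hp'
      have hpsum' : (p'.edges.map f').sum = wdist T' f' (ι' u) (ι' v) :=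
        (wdist_eq_of_isPath T' hT' f' p' (SimpleGraph.Walk.bypass_isPath _)).symm
      obtain ⟨w₀, hw₀⟩ := push_walk T T' φ hφ1 f f' N hf2 p'
      have h1 : wdist T f (ι u) (ι v) ≤ (w₀.edges.map f).sum := by
        rw [← hcomm u, ← hcomm v]; exact wdist_le_walk T hTtree f w₀
      have h2 : N * (k + 1) ≤ N * wdist T f (ι u) (ι v) := Nat.mul_le_mul_left _ hgt
      have h3 : N * wdist T f (ι u) (ι v) ≤ N * (w₀.edges.map f).sum :=
        Nat.mul_le_mul_left _ h1
      have h4 : N * (k + 1) = N * k + N := by ring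
      linarith

end LeafPaper
end

section
/- Let C = (x_0, y_0, x_1, y_1, …, x_{c−1}, y_{c−1}) be an alternating cycle of a graph G, and let T be an unweighted tree whose vertex set contains V(C) (with the vertices of C among its leaves). Then T can satisfy C if and only if there exists an edge e of T that belongs to strictly more negative paths than positive paths with respect to C. -/
open SimpleGraph

/-!
If `(T, f)` satisfies the cycle with threshold `k`, the negative paths are together longer than
the positive ones (`c * k < c * (k + 1)`); double counting writes both totals as
`∑ e, f e * #(paths through e)`, so some edge lies on more negative than positive paths.

Conversely, weight every edge `1`, add to the given edge `e` a weight `M` exceeding the total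
length of the positive paths, and put free weights `a i`, `b i` on the pendant edges of `x i`,
`y i`. The pendant edge of `y i` lies only on the `i`-th positive and negative paths, that of
`x i` only on the `i`-th positive and the `(i - 1)`-th negative path. Choosing `b i` so that every
positive path has length exactly `k` leaves the cyclic constraints `a i < a (i + 1) + q i - p i`
(`p i`, `q i` the base lengths of the `i`-th positive and negative paths), which prefix sums solve
since the total slack `∑ i, (q i - p i - 1)` is nonnegative by the choice of `M`.
-/

open Finset

theorem ZMod.sum_range_natCast {M : Type*} [AddCommMonoid M] {c : ℕ} [NeZero c] (g : ZMod c → M) :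
    ∑ s ∈ range c, g s = ∑ i : ZMod c, g i := by
  refine sum_nbij' (↑) ZMod.val (fun _ _ ↦ mem_univ _)
    (fun i _ ↦ mem_range.mpr (ZMod.val_lt i)) (fun s hs ↦ ?_)
    (fun i _ ↦ ZMod.natCast_zmod_val i) (fun _ _ ↦ rfl)
  exact ZMod.val_cast_of_lt (mem_range.mp hs)

theorem ZMod.exists_potential {c : ℕ} [NeZero c] (d : ZMod c → ℤ) (hd : 0 ≤ ∑ i, d i) :
    ∃ a : ZMod c → ℤ, ∀ i, a i ≤ a (i + 1) + d i := by
  let S : ℕ → ℤ := fun n ↦ ∑ s ∈ range n, d s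
  refine ⟨fun i ↦ -S i.val, fun i ↦ ?_⟩
  show -S i.val ≤ -S (i + 1).val + d i
  have hS : S (i.val + 1) = S i.val + d i := by
    simp only [S, sum_range_succ, ZMod.natCast_zmod_val]
  have hval : (i + 1).val = (i.val + 1) % c := by
    rw [ZMod.val_add, ZMod.val_one_eq_one_mod, Nat.add_mod_mod]
  rcases Nat.lt_or_eq_of_le (show i.val + 1 ≤ c from ZMod.val_lt i) with hlt | heq
  · rw [hval, Nat.mod_eq_of_lt hlt]
    linarith
  · have hwrap : S (i.val + 1) = ∑ i, d i := by rw [heq]; exact ZMod.sum_range_natCast d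
    rw [hval, heq, Nat.mod_self]
    simp only [S, range_zero, sum_empty] at hS hwrap ⊢
    linarith

theorem ZMod.exists_nat_potential {c : ℕ} [NeZero c] (d : ZMod c → ℤ) (hd : 0 ≤ ∑ i, d i) :
    ∃ a : ZMod c → ℕ, ∀ i, (a i : ℤ) ≤ a (i + 1) + d i := by
  obtain ⟨a, ha⟩ := ZMod.exists_potential d hd
  obtain ⟨m, hm⟩ := Finite.exists_ge a
  refine ⟨fun i ↦ (a i - m).toNat, fun i ↦ ?_⟩
  rw [Int.toNat_of_nonneg (sub_nonneg.mpr (hm i)), Int.toNat_of_nonneg (sub_nonneg.mpr (hm _))]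
  linarith [ha i]

theorem ZMod.exists_cyclic_weights {c : ℕ} [NeZero c] (p q : ZMod c → ℕ)
    (h : ∑ i, (p i + 1) ≤ ∑ i, q i) :
    ∃ (a b : ZMod c → ℕ) (k : ℕ), ∀ i, p i + a i + b i = k ∧ k < q i + a (i + 1) + b i := by
  have hd : 0 ≤ ∑ i, ((q i : ℤ) - p i - 1) := by
    have : ((∑ i, (p i + 1) : ℕ) : ℤ) ≤ ∑ i, q i := by exact_mod_cast h
    push_cast at this
    simp only [sum_sub_distrib, sum_add_distrib] at this ⊢
    linarith
  obtain ⟨a, ha⟩ := ZMod.exists_nat_potential _ hd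
  obtain ⟨k, hk⟩ : ∃ k, ∀ i, p i + a i ≤ k := Finite.exists_le _
  refine ⟨a, fun i ↦ k - (p i + a i), k, fun i ↦ ?_⟩
  have := hk i
  have := ha i
  dsimp only
  constructor <;> omega

theorem Finset.sum_sum_eq_sum_card_mul {ι α : Type*} [Fintype ι] [DecidableEq α] {U : Finset α}
    {S : ι → Finset α} (hS : ∀ i, S i ⊆ U) (f : α → ℕ) :
    ∑ i, ∑ e ∈ S i, f e = ∑ e ∈ U, #{i | e ∈ S i} * f e := by
  calc ∑ i, ∑ e ∈ S i, f e = ∑ i, ∑ e ∈ U, if e ∈ S i then f e else 0 := by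
        refine sum_congr rfl fun i _ ↦ ?_
        rw [sum_ite_mem, inter_eq_right.mpr (hS i)]
    _ = ∑ e ∈ U, #{i | e ∈ S i} * f e := by
        rw [sum_comm]
        refine sum_congr rfl fun e _ ↦ ?_
        rw [← sum_filter, sum_const, smul_eq_mul]

theorem Finset.exists_card_lt_of_sum_sum_lt {ι α : Type*} [Fintype ι] [DecidableEq α]
    {U : Finset α} {S R : ι → Finset α} (hS : ∀ i, S i ⊆ U) (hR : ∀ i, R i ⊆ U) (f : α → ℕ)
    (h : ∑ i, ∑ e ∈ S i, f e < ∑ i, ∑ e ∈ R i, f e) :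
    ∃ e ∈ U, #{i | e ∈ S i} < #{i | e ∈ R i} := by
  rw [sum_sum_eq_sum_card_mul hS, sum_sum_eq_sum_card_mul hR] at h
  by_contra! hle
  exact h.not_ge (sum_le_sum fun e he ↦ Nat.mul_le_mul_right _ (hle e he))

theorem Finset.sum_sum_ite_eq_of_mem_iff {ι α : Type*} [Fintype ι] [DecidableEq α]
    {s : Finset α} {g : ι → α} {i : ι} (hs : ∀ j, g j ∈ s ↔ j = i) (a : ι → ℕ) :
    ∑ e ∈ s, ∑ j, (if e = g j then a j else 0) = a i := by
  rw [sum_comm]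
  simp only [sum_ite_eq']
  rw [Fintype.sum_eq_single i fun j hj ↦ if_neg ((hs j).not.mpr hj), if_pos ((hs i).mpr rfl)]

namespace LeafPaper

variable {W : Type} {T : SimpleGraph W}

theorem treePathEdges_nodup (u v : W) : (treePathEdges T u v).Nodup := by
  classical
  unfold treePathEdges
  split_ifs
  exacts [(Walk.bypass_isPath _).edges_nodup, List.nodup_nil]

theorem mem_edgeSet_of_mem_treePathEdges {u v : W} {e : Sym2 W} (he : e ∈ treePathEdges T u v) :
    e ∈ T.edgeSet := by
  classical
  unfold treePathEdges at he
  split_ifs at he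
  exacts [Walk.edges_subset_edgeSet _ he, absurd he List.not_mem_nil]

theorem wdist_eq_sum [DecidableEq W] (f : Sym2 W → ℕ) (u v : W) :
    wdist T f u v = ∑ e ∈ (treePathEdges T u v).toFinset, f e :=
  (List.sum_toFinset f (treePathEdges_nodup u v)).symm

theorem IsLeaf.eq_or_eq_of_mem_support {w u v : W} (hw : IsLeaf T w) {p : T.Walk u v}
    (hp : p.IsPath) (h : w ∈ p.support) : w = u ∨ w = v := by
  obtain ⟨j, rfl, hj⟩ := Walk.mem_support_iff_exists_getVert.mp h
  by_contra! hne
  have h0 : j ≠ 0 := fun h ↦ hne.1 (by simp [h])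
  have hlen : j ≠ p.length := fun h ↦ hne.2 (by simp [h])
  obtain ⟨n, -, hn⟩ := hw
  have hprev : p.getVert (j - 1) = n := by
    refine hn _ (Adj.symm ?_)
    simpa [Nat.sub_add_cancel (Nat.pos_of_ne_zero h0)] using
      p.adj_getVert_succ (i := j - 1) (by omega)
  have hnext : p.getVert (j + 1) = n := hn _ (p.adj_getVert_succ (by omega))
  have := hp.getVert_injOn (by simp; omega) (by simp; omega) (hprev.trans hnext.symm)
  omega

theorem IsLeaf.mem_edges_of_start {w n v : W} (hw : IsLeaf T w) (hn : T.Adj w n) (p : T.Walk w v)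
    (hwv : w ≠ v) : s(w, n) ∈ p.edges := by
  cases p with
  | nil => exact absurd rfl hwv
  | cons h q => rw [Walk.edges_cons, ← hw.unique h hn]; exact List.mem_cons_self

theorem IsLeaf.mem_edges_iff {w n u v : W} (hw : IsLeaf T w) (hn : T.Adj w n) {p : T.Walk u v}
    (hp : p.IsPath) (huv : u ≠ v) : s(w, n) ∈ p.edges ↔ w = u ∨ w = v := by
  refine ⟨fun h ↦ hw.eq_or_eq_of_mem_support hp (p.fst_mem_support_of_mem_edges h), ?_⟩
  rintro (rfl | rfl)
  · exact hw.mem_edges_of_start hn p huv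
  · simpa using hw.mem_edges_of_start hn p.reverse huv.symm

theorem IsLeaf.mem_treePathEdges_iff {w n u v : W} (hw : IsLeaf T w) (hn : T.Adj w n)
    (h : T.Reachable u v) (huv : u ≠ v) : s(w, n) ∈ treePathEdges T u v ↔ w = u ∨ w = v := by
  classical
  unfold treePathEdges
  rw [dif_pos h]
  exact hw.mem_edges_iff hn (Walk.bypass_isPath _) huv

section AlternatingCycle

variable {c : ℕ} [NeZero c] {X Y : ZMod c → W}

theorem exists_card_lt_of_wdist [Fintype W] [DecidableEq W] {f : Sym2 W → ℕ} {k : ℕ}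
    (h : ∀ i, wdist T f (X i) (Y i) ≤ k ∧ k < wdist T f (Y i) (X (i + 1))) :
    ∃ e ∈ T.edgeSet, #{i | e ∈ treePathEdges T (X i) (Y i)} <
      #{i | e ∈ treePathEdges T (Y i) (X (i + 1))} := by
  classical
  have hsub : ∀ u v : W, (treePathEdges T u v).toFinset ⊆ T.edgeFinset := fun u v e he ↦
    mem_edgeFinset.mpr (mem_edgeSet_of_mem_treePathEdges (List.mem_toFinset.mp he))
  have hlt : ∑ i, wdist T f (X i) (Y i) < ∑ i, wdist T f (Y i) (X (i + 1)) :=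
    calc ∑ i, wdist T f (X i) (Y i) ≤ ∑ _i, k := sum_le_sum fun i _ ↦ (h i).1
      _ < ∑ _i, (k + 1) := sum_lt_sum_of_nonempty univ_nonempty fun i _ ↦ k.lt_add_one
      _ ≤ ∑ i, wdist T f (Y i) (X (i + 1)) := sum_le_sum fun i _ ↦ (h i).2
  simp only [wdist_eq_sum] at hlt
  obtain ⟨e, he, hcard⟩ := exists_card_lt_of_sum_sum_lt (fun _ ↦ hsub _ _) (fun _ ↦ hsub _ _) f hlt
  exact ⟨e, mem_edgeFinset.mp he, by simpa only [List.mem_toFinset] using hcard⟩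

theorem exists_weights_of_card_lt [DecidableEq W] (hconn : T.Connected)
    (hXY : Function.Injective (Sum.elim X Y)) (hleaf : ∀ i, IsLeaf T (X i) ∧ IsLeaf T (Y i))
    {e : Sym2 W} (he : #{i | e ∈ treePathEdges T (X i) (Y i)} <
      #{i | e ∈ treePathEdges T (Y i) (X (i + 1))}) :
    ∃ (f : Sym2 W → ℕ) (k : ℕ), (∀ e', 0 < f e') ∧
      ∀ i, wdist T f (X i) (Y i) ≤ k ∧ k < wdist T f (Y i) (X (i + 1)) := by
  obtain ⟨hX, hY, hXY⟩ := Sum.elim_injective.mp hXY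
  choose nx hnx using fun i ↦ (hleaf i).1
  choose ny hny using fun i ↦ (hleaf i).2
  set P := fun i ↦ (treePathEdges T (X i) (Y i)).toFinset
  set N := fun i ↦ (treePathEdges T (Y i) (X (i + 1))).toFinset
  have hmem : ∀ {u v w n : W}, IsLeaf T w → T.Adj w n → u ≠ v →
      (s(w, n) ∈ (treePathEdges T u v).toFinset ↔ w = u ∨ w = v) := fun hw hn huv ↦ by
    rw [List.mem_toFinset]; exact hw.mem_treePathEdges_iff hn (hconn.preconnected _ _) huv
  have hxP : ∀ i j, s(X j, nx j) ∈ P i ↔ j = i := fun i j ↦ by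
    rw [hmem (hleaf j).1 (hnx j).1 (hXY i i)]; simp [hX.eq_iff, hXY j i]
  have hyP : ∀ i j, s(Y j, ny j) ∈ P i ↔ j = i := fun i j ↦ by
    rw [hmem (hleaf j).2 (hny j).1 (hXY i i)]; simp [hY.eq_iff, (hXY i j).symm]
  have hxN : ∀ i j, s(X j, nx j) ∈ N i ↔ j = i + 1 := fun i j ↦ by
    rw [hmem (hleaf j).1 (hnx j).1 (hXY (i + 1) i).symm]; simp [hX.eq_iff, hXY j i]
  have hyN : ∀ i j, s(Y j, ny j) ∈ N i ↔ j = i := fun i j ↦ by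
    rw [hmem (hleaf j).2 (hny j).1 (hXY (i + 1) i).symm]; simp [hY.eq_iff, (hXY (i + 1) j).symm]
  obtain ⟨M, hM⟩ : ∃ M, M = ∑ i, (#(P i) + 1) := ⟨_, rfl⟩
  obtain ⟨g, hg⟩ : ∃ g : Sym2 W → ℕ, ∀ e', g e' = 1 + if e' = e then M else 0 := ⟨_, fun _ ↦ rfl⟩
  have hgs : ∀ s : Finset (Sym2 W), ∑ e' ∈ s, g e' = #s + if e ∈ s then M else 0 := by
    intro s; rw [sum_congr rfl fun e' _ ↦ hg e', sum_add_distrib, sum_ite_eq', card_eq_sum_ones]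
  have hsum : ∑ i, (∑ e' ∈ P i, g e' + 1) ≤ ∑ i, ∑ e' ∈ N i, g e' := by
    have hAB : (∑ i, if e ∈ P i then M else 0) + M ≤ ∑ i, if e ∈ N i then M else 0 := by
      simp only [← sum_filter, sum_const, smul_eq_mul, ← add_one_mul]
      exact Nat.mul_le_mul_right _ (by simp only [P, N, List.mem_toFinset]; exact he)
    rw [sum_add_distrib] at hM
    simp only [hgs, sum_add_distrib]
    omega
  obtain ⟨a, b, k, hk⟩ := ZMod.exists_cyclic_weights _ _ hsum
  refine ⟨fun e' ↦ g e' + ∑ j, (if e' = s(X j, nx j) then a j else 0) +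
    ∑ j, (if e' = s(Y j, ny j) then b j else 0), k, fun e' ↦ by simp only [hg]; omega, fun i ↦ ?_⟩
  simp only [wdist_eq_sum, sum_add_distrib]
  rw [sum_sum_ite_eq_of_mem_iff (hxP i), sum_sum_ite_eq_of_mem_iff (hyP i),
    sum_sum_ite_eq_of_mem_iff (hxN i), sum_sum_ite_eq_of_mem_iff (hyN i)]
  exact ⟨(hk i).1.le, (hk i).2⟩

end AlternatingCycle

theorem stmt_5_general {V W : Type} [Fintype W] (G : SimpleGraph V)
    (T : SimpleGraph W) (hT : T.IsTree) (ι : V → W) (hι : Function.Injective ι)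
    (c : ℕ) (x y : ZMod c → V) (hC : IsAltCycle G c x y)
    (hleaf : ∀ i : ZMod c, IsLeaf T (ι (x i)) ∧ IsLeaf T (ι (y i))) :
    CanSatisfy T ι c x y ↔
      ∃ e ∈ T.edgeSet,
        Nat.card {i : ZMod c // e ∈ treePathEdges T (ι (x i)) (ι (y i))} <
          Nat.card {i : ZMod c // e ∈ treePathEdges T (ι (y i)) (ι (x (i + 1)))} := by
  classical
  obtain ⟨hc, hxy, -⟩ := hC
  have : NeZero c := ⟨by omega⟩
  simp only [Nat.card_eq_fintype_card, Fintype.card_subtype]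
  constructor
  · rintro ⟨f, k, -, hsat⟩
    exact exists_card_lt_of_wdist (X := fun i ↦ ι (x i)) (Y := fun i ↦ ι (y i)) hsat
  · rintro ⟨e, -, he⟩
    have hinj : Function.Injective (Sum.elim (ι ∘ x) (ι ∘ y)) := by
      rw [← Sum.comp_elim]; exact hι.comp hxy
    obtain ⟨f, k, hf, hsat⟩ := exists_weights_of_card_lt hT.connected hinj hleaf he
    exact ⟨f, k, fun e' _ ↦ hf e', hsat⟩

/-- an unweighted tree `T` whose vertex set contains the vertices of an
alternating cycle `C` of `G` (with the vertices of `C` being leaves of `T`) can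
satisfy `C` iff some edge of `T` lies on strictly more negative paths than positive
paths with respect to `C`. -/
theorem stmt_5 {V W : Type} [Fintype V] [Fintype W] (G : SimpleGraph V)
    (T : SimpleGraph W) (hT : T.IsTree) (ι : V → W) (hι : Function.Injective ι)
    (c : ℕ) (x y : ZMod c → V) (hC : IsAltCycle G c x y)
    (hleaf : ∀ i : ZMod c, IsLeaf T (ι (x i)) ∧ IsLeaf T (ι (y i))) :
    CanSatisfy T ι c x y ↔
      ∃ e ∈ T.edgeSet,
        Nat.card {i : ZMod c // e ∈ treePathEdges T (ι (x i)) (ι (y i))} <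
          Nat.card {i : ZMod c // e ∈ treePathEdges T (ι (y i)) (ι (x (i + 1)))} :=
  stmt_5_general G T hT ι hι c x y hC hleaf

end LeafPaper
end

section
/- Let P_1 = x_0 x_1 … x_p and P_2 = y_0 y_1 … y_q be vertex-disjoint paths of a graph G (possibly with chords) such that for every 0 ≤ i < p and 0 ≤ j < q, the four vertices {x_i, x_{i+1}, y_j, y_{j+1}} form the vertex set of an alternating cycle of G. Then every unweighted leaf root of G contains the quartet x_0 x_p | y_0 y_q. -/
/-!
The tree path between `x₀` and `x_p` is covered by the tree paths between consecutive `xᵢ`,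
and likewise for `y`. So if the two long paths met, the tree paths of some edges `xᵢxᵢ₊₁` and
`yⱼyⱼ₊₁` would share a vertex `w`. Splitting at `w` and using the triangle inequality, both
other pairings of these four leaves then have total length at most
`d(xᵢ, xᵢ₊₁) + d(yⱼ, yⱼ₊₁) ≤ 2k`. But the alternating cycle on the four vertices has its two
non-edges, each longer than `k`, forming one of these pairings.
-/

open SimpleGraph

namespace LeafPaper

section WeightedTree

variable {W : Type} {T : SimpleGraph W} {f : Sym2 W → ℕ}

def OnPath (T : SimpleGraph W) (a b w : W) : Prop :=
  ∃ P : T.Walk a b, P.IsPath ∧ w ∈ P.support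

lemma OnPath.symm {a b w : W} (h : OnPath T a b w) : OnPath T b a w := by
  obtain ⟨P, hP, hw⟩ := h
  exact ⟨P.reverse, hP.reverse, by simpa using hw⟩

lemma wdist_eq_of_isPath_s7 (htree : T.IsTree) {a b : W} (P : T.Walk a b) (hP : P.IsPath) :
    wdist T f a b = (P.edges.map f).sum := by
  classical
  have hreach : T.Reachable a b := htree.connected.preconnected a b
  rw [wdist, treePathEdges, dif_pos hreach,
    (htree.existsUnique_path a b).unique (Walk.bypass_isPath _) hP]

lemma wdist_comm (htree : T.IsTree) (a b : W) : wdist T f a b = wdist T f b a := by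
  obtain ⟨P, hP, -⟩ := htree.existsUnique_path a b
  rw [wdist_eq_of_isPath_s7 htree P hP, wdist_eq_of_isPath_s7 htree P.reverse hP.reverse,
    Walk.edges_reverse, List.map_reverse, List.sum_reverse]

lemma wdist_triangle (htree : T.IsTree) (a b c : W) :
    wdist T f a c ≤ wdist T f a b + wdist T f b c := by
  classical
  obtain ⟨P, hP, -⟩ := htree.existsUnique_path a b
  obtain ⟨Q, hQ, -⟩ := htree.existsUnique_path b c
  rw [wdist_eq_of_isPath_s7 htree P hP, wdist_eq_of_isPath_s7 htree Q hQ,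
    wdist_eq_of_isPath_s7 htree _ (P.append Q).bypass_isPath, ← List.sum_append, ← List.map_append,
    ← Walk.edges_append]
  exact ((P.append Q).edges_bypass_sublist_edges.map f).sum_le_sum fun _ _ => Nat.zero_le _

lemma wdist_add_wdist_of_onPath (htree : T.IsTree) {a b w : W} (h : OnPath T a b w) :
    wdist T f a w + wdist T f w b = wdist T f a b := by
  classical
  obtain ⟨P, hP, hw⟩ := h
  rw [wdist_eq_of_isPath_s7 htree _ (hP.takeUntil hw), wdist_eq_of_isPath_s7 htree _ (hP.dropUntil hw),
    wdist_eq_of_isPath_s7 htree P hP, ← List.sum_append, ← List.map_append, ← Walk.edges_append,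
    P.take_spec hw]

lemma wdist_add_wdist_le_of_onPath (htree : T.IsTree) {a b c d w : W}
    (hab : OnPath T a b w) (hcd : OnPath T c d w) :
    wdist T f a c + wdist T f b d ≤ wdist T f a b + wdist T f c d := by
  have := wdist_add_wdist_of_onPath (f := f) htree hab
  have := wdist_add_wdist_of_onPath (f := f) htree hcd
  have := wdist_triangle (f := f) htree a w c
  have := wdist_triangle (f := f) htree b w d
  have := wdist_comm (f := f) htree w c
  have := wdist_comm (f := f) htree b w
  omega

lemma exists_onPath_succ_of_onPath (htree : T.IsTree) (z : ℕ → W) {n : ℕ} (hn : 1 ≤ n)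
    {w : W} (h : OnPath T (z 0) (z n) w) : ∃ i < n, OnPath T (z i) (z (i + 1)) w := by
  classical
  induction n, hn using Nat.le_induction generalizing w with
  | base => exact ⟨0, Nat.zero_lt_one, h⟩
  | succ n hn ih =>
    obtain ⟨P, hP, -⟩ := htree.existsUnique_path (z 0) (z n)
    obtain ⟨Q, hQ, -⟩ := htree.existsUnique_path (z n) (z (n + 1))
    obtain ⟨R, hR, hw⟩ := h
    -- the path `z 0`–`z (n + 1)` is the bypass of the concatenation `P ++ Q`
    rw [(htree.existsUnique_path _ _).unique hR (P.append Q).bypass_isPath] at hw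
    rcases (Walk.mem_support_append_iff _ _).1 ((P.append Q).support_bypass_subset_support hw)
      with hwP | hwQ
    · obtain ⟨i, hi, hwi⟩ := ih ⟨P, hP, hwP⟩
      exact ⟨i, by omega, hwi⟩
    · exact ⟨n, Nat.lt_succ_self n, Q, hQ, hwQ⟩

lemma exists_onPath_succ_of_onPath_fin (htree : T.IsTree) {n : ℕ} (hn : 1 ≤ n)
    (z : Fin (n + 1) → W) {w : W} (h : OnPath T (z 0) (z (Fin.last n)) w) :
    ∃ i : Fin n, OnPath T (z i.castSucc) (z i.succ) w := by
  obtain ⟨i, hi, hwi⟩ := exists_onPath_succ_of_onPath htree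
    (fun m => z ⟨min m n, Nat.lt_succ_of_le (min_le_right m n)⟩) hn
    (by convert h using 2 <;> simp [Fin.ext_iff])
  refine ⟨⟨i, hi⟩, ?_⟩
  convert hwi using 2 <;> simp [Fin.ext_iff] <;> omega

end WeightedTree

section AlternatingCycle

variable {V : Type} {G : SimpleGraph V}

lemma IsAltCycle.nonadj_cross {u v : ZMod 2 → V} (hC : IsAltCycle G 2 u v) {a b c d : V}
    (hset : ({u 0, v 0, u 1, v 1} : Set V) = {a, b, c, d})
    (hab : G.Adj a b) (hcd : G.Adj c d) :
    (a ≠ c ∧ ¬ G.Adj a c ∧ b ≠ d ∧ ¬ G.Adj b d) ∨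
      (a ≠ d ∧ ¬ G.Adj a d ∧ b ≠ c ∧ ¬ G.Adj b c) := by
  obtain ⟨-, hinj, hadj⟩ := hC
  have hne : ∀ s t : ZMod 2 ⊕ ZMod 2, s ≠ t → Sum.elim u v s ≠ Sum.elim u v t :=
    fun _ _ => hinj.ne
  have h00 := hne (.inl 0) (.inr 0) (by simp)
  have h01 := hne (.inl 0) (.inl 1) (by decide)
  have h02 := hne (.inl 0) (.inr 1) (by simp)
  have h10 := hne (.inr 0) (.inl 1) (by simp)
  have h11 := hne (.inr 0) (.inr 1) (by decide)
  have h12 := hne (.inl 1) (.inr 1) (by simp)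
  have n0 := (hadj 0).2
  have n1 := (hadj 1).2
  simp only [Sum.elim_inl, Sum.elim_inr, zero_add, show (1 : ZMod 2) + 1 = 0 from rfl]
    at h00 h01 h02 h10 h11 h12 n1 n0
  have mem : ∀ t ∈ ({u 0, v 0, u 1, v 1} : Set V), t = a ∨ t = b ∨ t = c ∨ t = d := by
    intro t ht
    rw [hset] at ht
    simpa using ht
  have m0 := mem (u 0) (by simp)
  have m1 := mem (v 0) (by simp)
  have m2 := mem (u 1) (by simp)
  have m3 := mem (v 1) (by simp)
  clear mem hset hne hadj hinj
  generalize u 0 = α at *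
  generalize v 0 = β at *
  generalize u 1 = γ at *
  generalize v 1 = δ at *
  have := hab.symm
  have := hcd.symm
  rcases m0 with rfl | rfl | rfl | rfl <;> rcases m1 with rfl | rfl | rfl | rfl <;>
    rcases m2 with rfl | rfl | rfl | rfl <;> rcases m3 with rfl | rfl | rfl | rfl <;>
    tauto

end AlternatingCycle

lemma IsLeafRoot.not_onPath_of_isAltCycle {V W : Type} {G : SimpleGraph V} {T : SimpleGraph W}
    {ι : V → W} {f : Sym2 W → ℕ} {k : ℕ} (hroot : IsLeafRoot G T ι f k)
    {u v : ZMod 2 → V} (hC : IsAltCycle G 2 u v) {a b c d : V}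
    (hset : ({u 0, v 0, u 1, v 1} : Set V) = {a, b, c, d})
    (hab : G.Adj a b) (hcd : G.Adj c d) {w : W}
    (hwab : OnPath T (ι a) (ι b) w) (hwcd : OnPath T (ι c) (ι d) w) : False := by
  obtain ⟨htree, -, -, -, hiff⟩ := hroot
  have near : ∀ {s t}, G.Adj s t → wdist T f (ι s) (ι t) ≤ k := fun h => (hiff _ _ h.ne).1 h
  have far : ∀ {s t}, s ≠ t → ¬ G.Adj s t → k < wdist T f (ι s) (ι t) :=
    fun hne hadj => not_le.1 fun h => hadj ((hiff _ _ hne).2 h)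
  have hab' := near hab
  have hcd' := near hcd
  rcases hC.nonadj_cross hset hab hcd with ⟨hac, nac, hbd, nbd⟩ | ⟨had, nad, hbc, nbc⟩
  · have := wdist_add_wdist_le_of_onPath (f := f) htree hwab hwcd
    have := far hac nac
    have := far hbd nbd
    omega
  · have := wdist_add_wdist_le_of_onPath (f := f) htree hwab hwcd.symm
    have := wdist_comm (f := f) htree (ι d) (ι c)
    have := far had nad
    have := far hbc nbc
    omega

theorem stmt_7_general {V : Type} (G : SimpleGraph V) (p q : ℕ)
    (hp : 1 ≤ p) (hq : 1 ≤ q)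
    (x : Fin (p + 1) → V) (y : Fin (q + 1) → V)
    (hx : Function.Injective x) (hy : Function.Injective y)
    (hxpath : ∀ i : Fin p, G.Adj (x i.castSucc) (x i.succ))
    (hypath : ∀ j : Fin q, G.Adj (y j.castSucc) (y j.succ))
    (hcyc : ∀ (i : Fin p) (j : Fin q), ∃ u w : ZMod 2 → V,
      IsAltCycle G 2 u w ∧
        ({u 0, w 0, u 1, w 1} : Set V) =
          {x i.castSucc, x i.succ, y j.castSucc, y j.succ}) :
    ∀ {W : Type} (T : SimpleGraph W) (ι : V → W), IsUnweightedLeafRoot G T ι →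
      ContainsQuartet T (ι (x 0)) (ι (x (Fin.last p))) (ι (y 0)) (ι (y (Fin.last q))) := by
  rintro W T ι ⟨f, k, hroot⟩
  have ⟨htree, hinj, hleaf, _⟩ := hroot
  have ends_ne : ∀ {n : ℕ} (z : Fin (n + 1) → V), Function.Injective z → 1 ≤ n →
      ι (z 0) ≠ ι (z (Fin.last n)) := fun z hz hn =>
    (hinj.comp hz).ne (by simp [Fin.ext_iff]; omega)
  refine ⟨(hleaf _).2 ⟨_, rfl⟩, (hleaf _).2 ⟨_, rfl⟩, (hleaf _).2 ⟨_, rfl⟩, (hleaf _).2 ⟨_, rfl⟩,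
    ends_ne x hx hp, ends_ne y hy hq, ?_⟩
  intro P P' hP hP' w hw hw'
  obtain ⟨i, hi⟩ := exists_onPath_succ_of_onPath_fin htree hp (ι ∘ x) ⟨P, hP, hw⟩
  obtain ⟨j, hj⟩ := exists_onPath_succ_of_onPath_fin htree hq (ι ∘ y) ⟨P', hP', hw'⟩
  obtain ⟨u, v, hC, hset⟩ := hcyc i j
  exact hroot.not_onPath_of_isAltCycle hC hset (hxpath i) (hypath j) hi hj

/-- let `P₁ = x₀…x_p` and `P₂ = y₀…y_q` be vertex-disjoint paths of `G`
(possibly with chords) such that for all `i < p`, `j < q` the four vertices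
`{x i, x (i+1), y j, y (j+1)}` form the vertex set of an alternating cycle of `G`.
Then every unweighted leaf root of `G` contains the quartet `x₀ x_p | y₀ y_q`. -/
theorem stmt_7 {V : Type} [Fintype V] (G : SimpleGraph V) (p q : ℕ)
    (hp : 1 ≤ p) (hq : 1 ≤ q)
    (x : Fin (p + 1) → V) (y : Fin (q + 1) → V)
    (hx : Function.Injective x) (hy : Function.Injective y)
    (hxpath : ∀ i : Fin p, G.Adj (x i.castSucc) (x i.succ))
    (hypath : ∀ j : Fin q, G.Adj (y j.castSucc) (y j.succ))
    (hdisj : ∀ (i : Fin (p + 1)) (j : Fin (q + 1)), x i ≠ y j)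
    (hcyc : ∀ (i : Fin p) (j : Fin q), ∃ u w : ZMod 2 → V,
      IsAltCycle G 2 u w ∧
        ({u 0, w 0, u 1, w 1} : Set V) =
          {x i.castSucc, x i.succ, y j.castSucc, y j.succ}) :
    ∀ {W : Type} (T : SimpleGraph W) (ι : V → W), IsUnweightedLeafRoot G T ι →
      ContainsQuartet T (ι (x 0)) (ι (x (Fin.last p))) (ι (y 0)) (ι (y (Fin.last q))) :=
  stmt_7_general G p q hp hq x y hx hy hxpath hypath hcyc

end LeafPaper
end

section
/- Let T be a tree and let a, b, c_0, c_1, …, c_l be distinct leaves of T (l ≥ 1). If T contains the quartet ab|c_i c_{i+1} for every 0 ≤ i < l, then T contains the quartet ab|c_0 c_l. -/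
open SimpleGraph

namespace LeafPaper

/-
Fix a path `p` from `a` to `b`. Consecutive `cᵢ, cᵢ₊₁` are joined by paths avoiding `p`, and
concatenating them yields a walk from `c₀` to `c_l` avoiding `p`. In a tree the path from `c₀` to
`c_l` is obtained from any walk between them by deleting detours, so it avoids `p` as well.
-/

theorem _root_.SimpleGraph.IsAcyclic.support_subset_of_isPath {V : Type*} {G : SimpleGraph V}
    (hG : G.IsAcyclic) {u v : V} {p : G.Walk u v} (hp : p.IsPath) (q : G.Walk u v) :
    p.support ⊆ q.support := by
  classical
  have hpq : p = q.bypass :=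
    congrArg Subtype.val ((hG.subsingleton_path u v).elim ⟨p, hp⟩ ⟨q.bypass, q.bypass_isPath⟩)
  exact hpq ▸ q.support_bypass_subset_support

theorem _root_.Fin.rel_zero_last_of_rel_castSucc_succ {α : Type*} {r : α → α → Prop}
    (hr : ∀ x y z, r x y → r y z → r x z) {l : ℕ} (hl : l ≠ 0) {c : Fin (l + 1) → α}
    (h : ∀ i : Fin l, r (c i.castSucc) (c i.succ)) : r (c 0) (c (Fin.last l)) := by
  obtain ⟨m, rfl⟩ := Nat.exists_eq_succ_of_ne_zero hl
  refine Fin.induction (motive := fun i => r (c 0) (c i.succ)) (h 0) (fun i ih => ?_) (Fin.last m)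
  exact hr _ _ _ ih (Fin.succ_castSucc i ▸ h i.succ)

theorem stmt_8_general {W : Type} (T : SimpleGraph W) (hT : T.IsTree)
    (a b : W) (l : ℕ) (hl : 1 ≤ l) (c : Fin (l + 1) → W)
    (hab : a ≠ b) (hc : Function.Injective c)
    (hla : IsLeaf T a) (hlb : IsLeaf T b) (hlc : ∀ i, IsLeaf T (c i))
    (h : ∀ i : Fin l, ContainsQuartet T a b (c i.castSucc) (c i.succ)) :
    ContainsQuartet T a b (c 0) (c (Fin.last l)) := by
  refine ⟨hla, hlb, hlc 0, hlc _, hab, fun h0 => ?_, fun p p' hp hp' w hwp hwp' => ?_⟩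
  · have hl0 := congrArg Fin.val (hc h0)
    simp only [Fin.val_zero, Fin.val_last] at hl0
    omega
  let Avoiding (x y : W) : Prop := ∃ q : T.Walk x y, ∀ v ∈ q.support, v ∉ p.support
  have avoiding_trans (x y z : W) : Avoiding x y → Avoiding y z → Avoiding x z := by
    rintro ⟨q, hq⟩ ⟨q', hq'⟩
    refine ⟨q.append q', fun v hv => ?_⟩
    rcases (Walk.mem_support_append_iff q q').mp hv with hv | hv
    exacts [hq v hv, hq' v hv]
  have avoiding_step (i : Fin l) : Avoiding (c i.castSucc) (c i.succ) := by
    obtain ⟨P, hP⟩ := (hT.existsUnique_path (c i.castSucc) (c i.succ)).exists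
    exact ⟨P, fun v hv hvp => (h i).2.2.2.2.2.2 p P hp hP v hvp hv⟩
  obtain ⟨q, hq⟩ := Fin.rel_zero_last_of_rel_castSucc_succ avoiding_trans (by omega) avoiding_step
  exact hq w (hT.isAcyclic.support_subset_of_isPath hp' q hwp') hwp

/-- if a tree `T` contains the quartet `ab|cᵢc_{i+1}` for each
`0 ≤ i < l` (where `a, b, c₀, …, c_l` are distinct leaves of `T`), then `T`
contains the quartet `ab|c₀c_l`. -/
theorem stmt_8 {W : Type} [Fintype W] (T : SimpleGraph W) (hT : T.IsTree)
    (a b : W) (l : ℕ) (hl : 1 ≤ l) (c : Fin (l + 1) → W)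
    (hab : a ≠ b) (hc : Function.Injective c)
    (hca : ∀ i, c i ≠ a) (hcb : ∀ i, c i ≠ b)
    (hla : IsLeaf T a) (hlb : IsLeaf T b) (hlc : ∀ i, IsLeaf T (c i))
    (h : ∀ i : Fin l, ContainsQuartet T a b (c i.castSucc) (c i.succ)) :
    ContainsQuartet T a b (c 0) (c (Fin.last l)) :=
  stmt_8_general T hT a b l hl c hab hc hla hlb hlc h

end LeafPaper
end

section
/- If a graph G is a leaf power, then G contains no induced cycle on four vertices; that is, there are no four vertices a, b, c, d of G with ab, bc, cd, da ∈ E(G) and ac, bd ∉ E(G). -/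
open SimpleGraph

namespace LeafPaper

section Aux
open SimpleGraph Walk

variable {X : Type} [DecidableEq X] {T : SimpleGraph X}

lemma tree_path_length_eq (hT : T.IsTree) {u v : X} {p : T.Walk u v}
    (hp : p.IsPath) : p.length = T.dist u v := by
  obtain ⟨q, hq⟩ := hT.isConnected.exists_walk_length_eq_dist u v
  have hbp : q.bypass.IsPath := q.bypass_isPath
  have h1 : T.dist u v ≤ q.bypass.length := SimpleGraph.dist_le _
  have h2 : q.bypass.length ≤ q.length := q.length_bypass_le
  have hlen : q.bypass.length = T.dist u v := le_antisymm (hq ▸ h2) h1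
  have := (hT.existsUnique_path u v).unique hp hbp
  rw [this, hlen]

lemma tree_dist_split (hT : T.IsTree) {u v w : X} {p : T.Walk u v}
    (hp : p.IsPath) (hw : w ∈ p.support) :
    T.dist u w + T.dist w v = T.dist u v := by
  have h1 := tree_path_length_eq hT (hp.takeUntil hw)
  have h2 := tree_path_length_eq hT (hp.dropUntil hw)
  have h3 : (p.takeUntil w hw).length + (p.dropUntil w hw).length = p.length := by
    have := congr_arg Walk.length (p.take_spec hw)
    rwa [Walk.length_append] at this
  have h4 := tree_path_length_eq hT hp
  omega

/-- A prefix of a walk up to the first vertex in a set `S`. -/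
lemma exists_prefix_first_mem {a b : X} (p : T.Walk a b) (S : Set X) (hb : b ∈ S) :
    ∃ (m : X) (r : T.Walk a m), m ∈ S ∧ (∀ x ∈ r.support, x ∈ p.support) ∧
      (∀ x ∈ r.support, x ∈ S → x = m) ∧ (p.IsPath → r.IsPath) := by
  induction p with
  | nil =>
    exact ⟨_, Walk.nil, hb, fun x hx => hx, fun x hx _ => by simpa using hx,
      fun _ => Walk.IsPath.nil⟩
  | @cons u u' w h p ih =>
    by_cases haS : u ∈ S
    · exact ⟨u, Walk.nil, haS, fun x hx => by simp at hx; simp [hx],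
        fun x hx _ => by simpa using hx, fun _ => Walk.IsPath.nil⟩
    · obtain ⟨m, r, hmS, hsub, hfirst, hpath⟩ := ih hb
      refine ⟨m, Walk.cons h r, hmS, ?_, ?_, ?_⟩
      · intro x hx
        rw [Walk.support_cons, List.mem_cons] at hx ⊢
        rcases hx with rfl | hx
        · exact Or.inl rfl
        · exact Or.inr (hsub x hx)
      · intro x hx hxS
        rw [Walk.support_cons, List.mem_cons] at hx
        rcases hx with rfl | hx
        · exact absurd hxS haS
        · exact hfirst x hx hxS
      · intro hcons
        rw [Walk.cons_isPath_iff] at hcons ⊢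
        exact ⟨hpath hcons.1, fun hmem => hcons.2 (hsub u hmem)⟩

/-- Median: for any `b`, there is a vertex `m` on the given `a`-`c` path realizing
the tree distances from `b`. -/
lemma tree_median (hT : T.IsTree) (a b c : X) (P : T.Walk a c) (hP : P.IsPath) :
    ∃ m ∈ P.support, T.dist a b = T.dist a m + T.dist m b ∧
      T.dist b c = T.dist b m + T.dist m c := by
  obtain ⟨p, hp, -⟩ := hT.existsUnique_path a b
  obtain ⟨q, hq, -⟩ := hT.existsUnique_path b c
  obtain ⟨m, r, hmq, hsub, hfirst, hrpath'⟩ :=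
    exists_prefix_first_mem p {x | x ∈ q.support} q.start_mem_support
  have hrpath : r.IsPath := hrpath' hp
  have hmp : m ∈ p.support := hsub m r.end_mem_support
  -- build a path from a to c through m
  set W : T.Walk a c := r.append (q.dropUntil m hmq) with hW
  have hWpath : W.IsPath := by
    rw [Walk.isPath_def, Walk.support_append]
    apply List.Nodup.append
    · exact hrpath.support_nodup
    · exact (hq.dropUntil hmq).support_nodup.tail
    · intro x hxr hxd
      have hxq : x ∈ q.support := by
        have h1 : x ∈ (q.dropUntil m hmq).support :=
          (q.dropUntil m hmq).support_eq_cons ▸ List.mem_cons_of_mem _ hxd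
        exact q.support_dropUntil_subset hmq h1
      have hxm : x = m := hfirst x hxr hxq
      rw [hxm] at hxd
      have hcons : (q.dropUntil m hmq).support = m :: (q.dropUntil m hmq).support.tail :=
        (q.dropUntil m hmq).support_eq_cons
      have hnd := (hq.dropUntil hmq).support_nodup
      rw [hcons] at hnd
      exact (List.nodup_cons.mp hnd).1 hxd
  have hWP : W = P := (hT.existsUnique_path a c).unique hWpath hP
  have hmW : m ∈ W.support := by
    rw [hW, Walk.mem_support_append_iff]
    exact Or.inl r.end_mem_support
  refine ⟨m, hWP ▸ hmW, ?_, ?_⟩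
  · exact (tree_dist_split hT hp hmp).symm
  · exact (tree_dist_split hT hq hmq).symm

end Aux

/-- a leaf power contains no induced cycle on four vertices. -/
theorem stmt_9 {V : Type} [Fintype V] (G : SimpleGraph V) (h : IsLeafPower G) :
    ¬ ∃ a b c d : V, a ≠ b ∧ a ≠ c ∧ a ≠ d ∧ b ≠ c ∧ b ≠ d ∧ c ≠ d ∧
      G.Adj a b ∧ G.Adj b c ∧ G.Adj c d ∧ G.Adj d a ∧ ¬ G.Adj a c ∧ ¬ G.Adj b d := by
  rintro ⟨a, b, c, d, hab, hac, had, hbc, hbd, hcd,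
    eab, ebc, ecd, eda, nac, nbd⟩
  classical
  obtain ⟨W, T, ι, k, _, hT, hinj, -, hk, hadj⟩ := h
  have hconn := hT.isConnected
  -- distances
  have hAB : T.dist (ι a) (ι b) ≤ k := (hadj a b hab).mp eab
  have hBC : T.dist (ι b) (ι c) ≤ k := (hadj b c hbc).mp ebc
  have hCD : T.dist (ι c) (ι d) ≤ k := (hadj c d hcd).mp ecd
  have hDA : T.dist (ι d) (ι a) ≤ k := (hadj d a (Ne.symm had)).mp eda
  have hACgt : ¬ T.dist (ι a) (ι c) ≤ k := fun h' => nac ((hadj a c hac).mpr h')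
  have hBDgt : ¬ T.dist (ι b) (ι d) ≤ k := fun h' => nbd ((hadj b d hbd).mpr h')
  rw [not_le] at hACgt hBDgt
  obtain ⟨P, hP, -⟩ := hT.existsUnique_path (ι a) (ι c)
  obtain ⟨m, hmP, em1, em2⟩ := tree_median hT (ι a) (ι b) (ι c) P hP
  obtain ⟨n, hnP, en1, en2⟩ := tree_median hT (ι a) (ι d) (ι c) P hP
  have hsplitm : T.dist (ι a) m + T.dist m (ι c) = T.dist (ι a) (ι c) :=
    tree_dist_split hT hP hmP
  have hsplitn : T.dist (ι a) n + T.dist n (ι c) = T.dist (ι a) (ι c) :=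
    tree_dist_split hT hP hnP
  -- triangles
  have t1 : T.dist (ι b) (ι d) ≤ T.dist (ι b) m + T.dist m (ι d) :=
    hconn.dist_triangle
  have t2 : T.dist m (ι d) ≤ T.dist m n + T.dist n (ι d) :=
    hconn.dist_triangle
  -- commutations
  have c1 : T.dist (ι b) m = T.dist m (ι b) := SimpleGraph.dist_comm ..
  have c2 : T.dist (ι d) n = T.dist n (ι d) := SimpleGraph.dist_comm ..
  have c3 : T.dist m n = T.dist n m := SimpleGraph.dist_comm ..
  have c4 : T.dist (ι c) (ι d) = T.dist (ι d) (ι c) := SimpleGraph.dist_comm ..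
  have c5 : T.dist (ι b) (ι c) = T.dist (ι c) (ι b) := SimpleGraph.dist_comm ..
  have c6 : T.dist (ι d) (ι a) = T.dist (ι a) (ι d) := SimpleGraph.dist_comm ..
  -- whether n is before or after m on P
  have hnP' := hnP
  rw [← P.take_spec hmP, Walk.mem_support_append_iff] at hnP'
  rcases hnP' with hcase | hcase
  · have key : T.dist (ι a) n + T.dist n m = T.dist (ι a) m :=
      tree_dist_split hT (hP.takeUntil hmP) hcase
    omega
  · have key : T.dist m n + T.dist n (ι c) = T.dist m (ι c) :=
      tree_dist_split hT (hP.dropUntil hmP) hcase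
    omega


end LeafPaper
end

section
/- Let n ≥ 5 and let x_0, x_1, …, x_{n−1} be n distinct elements. Then the set of quartets { x_i x_{i+1} | x_{i+2} x_{i+3} : 0 ≤ i ≤ n−1 } (indices modulo n) is incompatible, i.e., no tree contains all of these quartets. -/
/-!
Let `p i` be the tree path from `x i` to `x (i+1)` and `t i` the first vertex of `p i` lying on
`p (i+1)`. The quartets say that `p i` and `p (i+2)` are disjoint. Hence `t i` lies on `p (i+1)`
strictly before `t (i+1)`, and the piece of `p (i+1)` from `t i` to `t (i+1)` meets `p (i+2)` only
at `t (i+1)`. Consecutive pieces therefore never backtrack at their junctions, so going once around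
the index cycle gives a closed non-backtracking walk of positive length, which a tree does not have.
-/

open SimpleGraph

namespace SimpleGraph

variable {V : Type*} {G : SimpleGraph V} {ι : Type*} {f : ι → ι} {t : ι → V}

namespace Walk

theorem exists_append_eq_first_mem (P : V → Prop) {u v : V} (p : G.Walk u v) (hv : P v) :
    ∃ (t : V) (q : G.Walk u t) (r : G.Walk t v), q.append r = p ∧ P t ∧
      ∀ w ∈ q.support, P w → w = t := by
  induction p with
  | nil => exact ⟨_, nil, nil, rfl, hv, by simp⟩
  | @cons a b c hadj p ih =>
    by_cases ha : P a
    · exact ⟨a, nil, cons hadj p, rfl, ha, by simp⟩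
    · obtain ⟨t, q, r, rfl, ht, hfirst⟩ := ih hv
      refine ⟨t, cons hadj q, r, rfl, ht, fun w hw hPw => ?_⟩
      rcases List.mem_cons.mp hw with rfl | hw
      · exact absurd hPw ha
      · exact hfirst w hw hPw

theorem ne_of_mem_getLast?_edges_of_mem_head?_edges {u v w : V} {p : G.Walk u v}
    {q : G.Walk v w} (hturn : p.penultimate ≠ q.snd) {e e' : Sym2 V}
    (he : e ∈ p.edges.getLast?) (he' : e' ∈ q.edges.head?) : e ≠ e' := by
  have hpe : p.edges ≠ [] := by rintro h; simp [h] at he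
  have hqe : q.edges ≠ [] := by rintro h; simp [h] at he'
  rw [List.getLast?_eq_some_getLast hpe, Option.mem_some_iff,
    getLast_edges_eq_mk_penultimate_end] at he
  rw [List.head?_eq_some_head hqe, Option.mem_some_iff, head_edges_eq_mk_start_snd] at he'
  subst he he'
  intro hee'
  rcases Sym2.eq_iff.mp hee' with ⟨h, -⟩ | ⟨h, -⟩
  · exact (adj_penultimate (edges_eq_nil.not.mp hpe)).ne h
  · exact hturn h

-- Prepending `P i` makes the endpoint `f^[m + 1] i = f^[m] (f i)` hold definitionally.
def iterateAppend (P : ∀ i, G.Walk (t i) (t (f i))) :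
    ∀ (m : ℕ) (i : ι), G.Walk (t i) (t (f^[m] i))
  | 0, _ => nil
  | m + 1, i => (P i).append (iterateAppend P m (f i))

theorem edges_iterateAppend_succ (P : ∀ i, G.Walk (t i) (t (f i))) (m : ℕ) (i : ι) :
    (iterateAppend P (m + 1) i).edges = (P i).edges ++ (iterateAppend P m (f i)).edges :=
  edges_append _ _

variable {P : ∀ i, G.Walk (t i) (t (f i))}

theorem head?_edges_iterateAppend_succ (hnil : ∀ i, ¬(P i).Nil) (m : ℕ) (i : ι) :
    (iterateAppend P (m + 1) i).edges.head? = (P i).edges.head? := by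
  rw [edges_iterateAppend_succ, List.head?_append,
    List.head?_eq_some_head (edges_eq_nil.not.mpr (hnil i))]
  rfl

theorem isChain_edges_iterateAppend (hP : ∀ i, (P i).edges.IsChain (· ≠ ·))
    (hnil : ∀ i, ¬(P i).Nil) (hturn : ∀ i, (P i).penultimate ≠ (P (f i)).snd) (m : ℕ) (i : ι) :
    (iterateAppend P m i).edges.IsChain (· ≠ ·) := by
  induction m generalizing i with
  | zero => simp [iterateAppend]
  | succ m ih =>
    rw [edges_iterateAppend_succ, List.isChain_append]
    refine ⟨hP i, ih (f i), fun e he e' he' => ?_⟩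
    cases m with
    | zero => simp [iterateAppend] at he'
    | succ m =>
      rw [head?_edges_iterateAppend_succ hnil] at he'
      exact ne_of_mem_getLast?_edges_of_mem_head?_edges (hturn i) he he'

end Walk

theorem IsAcyclic.apply_iterate_succ_ne (hG : G.IsAcyclic) {P : ∀ i, G.Walk (t i) (t (f i))}
    (hP : ∀ i, (P i).IsPath) (hnil : ∀ i, ¬(P i).Nil)
    (hturn : ∀ i, (P i).penultimate ≠ (P (f i)).snd) (m : ℕ) (i : ι) :
    t (f^[m + 1] i) ≠ t i := by
  intro h
  have hpath : ((Walk.iterateAppend P (m + 1) i).copy rfl h).IsPath := by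
    rw [Walk.isPath_copy, hG.isPath_iff_isChain]
    exact Walk.isChain_edges_iterateAppend (fun i => (hG.isPath_iff_isChain _).mp (hP i)) hnil
      hturn _ _
  have hhead := Walk.head?_edges_iterateAppend_succ hnil m i
  rw [← Walk.edges_copy _ rfl h, Walk.edges_eq_nil.mpr (Walk.isPath_iff_nil.mp hpath),
    List.head?_nil, eq_comm, List.head?_eq_none_iff, Walk.edges_eq_nil] at hhead
  exact hnil i hhead

theorem IsAcyclic.support_subset_of_isPath_s10 (hG : G.IsAcyclic) {u v w : V} {p : G.Walk u v}
    (hp : p.IsPath) (hw : w ∈ p.support) {r : G.Walk u w} (hr : r.IsPath) :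
    r.support ⊆ p.support := by
  classical
  obtain rfl : r = p.takeUntil w hw :=
    congrArg Subtype.val ((hG.subsingleton_path u w).elim ⟨r, hr⟩ ⟨_, hp.takeUntil hw⟩)
  exact p.support_takeUntil_subset_support hw

theorem IsAcyclic.exists_nonbacktracking_of_disjoint (hG : G.IsAcyclic) {a : ι → V}
    {p : ∀ i, G.Walk (a i) (a (f i))} (hp : ∀ i, (p i).IsPath)
    (hdisj : ∀ i, (p i).support.Disjoint (p (f (f i))).support) :
    ∃ (t : ι → V) (P : ∀ i, G.Walk (t i) (t (f i))),
      (∀ i, (P i).IsPath) ∧ (∀ i, ¬(P i).Nil) ∧ ∀ i, (P i).penultimate ≠ (P (f i)).snd := by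
  classical
  choose t q r hqr ht hfirst using fun i =>
    (p i).exists_append_eq_first_mem (· ∈ (p (f i)).support) (p (f i)).start_mem_support
  have hq_sub : ∀ i, (q i).support ⊆ (p i).support := fun i w hw => by
    rw [← hqr i, Walk.mem_support_append_iff]
    exact Or.inl hw
  have hq : ∀ i, (q i).IsPath := fun i => (hqr i ▸ hp i).of_append_left
  have hr_sub : ∀ i, (r i).support ⊆ (p (f i)).support := fun i w hw => by
    refine hG.support_subset_of_isPath_s10 (hp (f i)) (ht i) (hqr i ▸ hp i).of_append_right.reverse ?_
    rwa [Walk.support_reverse, List.mem_reverse]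
  have ht_mem_p : ∀ i, t i ∈ (p i).support := fun i => hq_sub i (q i).end_mem_support
  have ht_mem_q : ∀ i, t i ∈ (q (f i)).support := fun i => by
    have h := ht i
    rw [← hqr (f i), Walk.mem_support_append_iff] at h
    exact h.resolve_right fun h => hdisj i (ht_mem_p i) (hr_sub (f i) h)
  let P i : G.Walk (t i) (t (f i)) := (q (f i)).dropUntil (t i) (ht_mem_q i)
  have hP_sub : ∀ i, (P i).support ⊆ (q (f i)).support := fun i =>
    (q (f i)).support_dropUntil_subset_support _
  have hnil : ∀ i, ¬(P i).Nil := fun i =>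
    Walk.not_nil_of_ne fun h => hdisj i (ht_mem_p i) (h ▸ ht (f i))
  refine ⟨t, P, fun i => (hq (f i)).dropUntil _, hnil, fun i hturn => ?_⟩
  have hmem : (P i).penultimate ∈ (P (f i)).support := by
    rw [hturn]
    exact (P (f i)).getVert_mem_support 1
  exact (Walk.adj_penultimate (hnil i)).ne <| hfirst (f i) _
    (hP_sub i ((P i).getVert_mem_support _)) (hq_sub _ (hP_sub (f i) hmem))

theorem IsAcyclic.iterate_succ_ne_of_disjoint (hG : G.IsAcyclic) {a : ι → V}
    {p : ∀ i, G.Walk (a i) (a (f i))} (hp : ∀ i, (p i).IsPath)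
    (hdisj : ∀ i, (p i).support.Disjoint (p (f (f i))).support) (m : ℕ) (i : ι) :
    f^[m + 1] i ≠ i := by
  obtain ⟨t, P, hP, hnil, hturn⟩ := hG.exists_nonbacktracking_of_disjoint hp hdisj
  exact fun h => hG.apply_iterate_succ_ne hP hnil hturn m i (congrArg t h)

end SimpleGraph

namespace LeafPaper

theorem stmt_10_general {α : Type} (n : ℕ) (hn : 5 ≤ n) (x : ZMod n → α) :
    ∀ (W : Type) (T : SimpleGraph W), T.IsTree → ∀ ι : α → W, Function.Injective ι →
      ¬ ∀ i : ZMod n,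
          ContainsQuartet T (ι (x i)) (ι (x (i + 1))) (ι (x (i + 2))) (ι (x (i + 3))) := by
  intro W T hT ι _ hquartet
  choose p hp using fun i : ZMod n => (hT.existsUnique_path (ι (x i)) (ι (x (i + 1)))).exists
  have hdisj : ∀ i, (p i).support.Disjoint (p (i + 1 + 1)).support := fun i w hw hw' =>
    (hquartet i).2.2.2.2.2.2 (p i) ((p (i + 1 + 1)).copy (by ring_nf) (by ring_nf)) (hp i)
      (by simpa using hp _) w hw (by simpa using hw')
  refine hT.isAcyclic.iterate_succ_ne_of_disjoint (f := (· + 1)) hp hdisj (n - 1) 0 ?_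
  rw [Nat.sub_add_cancel (by omega), add_right_iterate_apply, nsmul_one, ZMod.natCast_self,
    zero_add]

/-- for `n ≥ 5` and `n` distinct elements `x 0, …, x (n-1)`, no tree
contains all the quartets `x i x (i+1) | x (i+2) x (i+3)` (indices mod `n`). -/
theorem stmt_10 {α : Type} (n : ℕ) (hn : 5 ≤ n) (x : ZMod n → α)
    (hx : Function.Injective x) :
    ∀ (W : Type) (T : SimpleGraph W), T.IsTree → ∀ ι : α → W, Function.Injective ι →
      ¬ ∀ i : ZMod n,
          ContainsQuartet T (ι (x i)) (ι (x (i + 1))) (ι (x (i + 2))) (ι (x (i + 3))) :=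
  stmt_10_general n hn x

end LeafPaper
end

section
/- For all integers r, q ≥ 3 and distinct elements a_1, …, a_r, b_1, …, b_q, the set of quartets Q = { a_i a_{i+1} | b_j b_{j+1} : 1 ≤ i ≤ r−1, 1 ≤ j ≤ q−1 } ∪ { a_1 b_1 | a_r b_q } is incompatible; moreover, every proper subset of Q is compatible. -/
open SimpleGraph

namespace LeafPaper

/-- A set of quartets (given as ordered 4-tuples `(a, b, c, d)` representing `ab|cd`)
is compatible if some tree contains all of them. -/
def CompatibleFam {α : Type} (Q : Set (α × α × α × α)) : Prop :=
  ∃ (W : Type) (T : SimpleGraph W) (ι : α → W),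
    T.IsTree ∧ Function.Injective ι ∧
      ∀ t ∈ Q, ContainsQuartet T (ι t.1) (ι t.2.1) (ι t.2.2.1) (ι t.2.2.2)

/-- The set of quartets
`{ a_i a_{i+1} | b_j b_{j+1} : 1 ≤ i ≤ r-1, 1 ≤ j ≤ q-1 } ∪ { a_1 b_1 | a_r b_q }`
(here `a`, `b` are indexed by `Fin r`, `Fin q`, i.e. `0`-based). -/
def shuttersQ {α : Type} (r q : ℕ) (a : Fin r → α) (b : Fin q → α) :
    Set (α × α × α × α) :=
  {t | (∃ (i i' : Fin r) (j j' : Fin q),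
          i'.val = i.val + 1 ∧ j'.val = j.val + 1 ∧ t = (a i, a i', b j, b j')) ∨
       (∃ (i0 ir : Fin r) (j0 jq : Fin q),
          i0.val = 0 ∧ ir.val = r - 1 ∧ j0.val = 0 ∧ jq.val = q - 1 ∧
          t = (a i0, b j0, a ir, b jq))}

/-!
If a tree contains all the grid quartets, the tree paths between consecutive `a_i` avoid those
between consecutive `b_j`, so chaining them gives disjoint walks `a_0 – a_{r-1}` and
`b_0 – b_{q-1}`. Together with `a_0 b_0 | a_{r-1} b_{q-1}` this forces the path from `a_0` to
`b_{q-1}` to cross an edge from the `a_0 b_0`-path to the `a_{r-1} b_{q-1}`-path whose ends the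
other three paths join without it, which is impossible in a tree.

For minimality, close two paths `u_0 … u_{r-1}` and `v_0 … v_{q-1}` into cycles through a common
edge `hub hub'` (`u_0, v_0` adjacent to `hub`, `u_{r-1}, v_{q-1}` adjacent to `hub'`), hang `a_i`
from `u_i` and `b_j` from `v_j`, and cut the cycles between `u_I, u_{I+1}` and between
`v_J, v_{J+1}`. This tree contains every quartet of `Q` except `a_I a_{I+1} | b_J b_{J+1}`; cutting
instead at the edges `u_{r-1} hub'` and `v_{q-1} hub'` loses only `a_0 b_0 | a_{r-1} b_{q-1}`.
-/

section ParentGraph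

variable {W : Type}

def parentGraph (par : W → W) : SimpleGraph W := fromRel fun x y => par x = y

def IsParentMap (par : W → W) (root : W) : Prop :=
  par root = root ∧ ∃ rk : W → ℕ, ∀ w, w ≠ root → rk (par w) < rk w

/-- In a rooted tree these are exactly the vertex sets of subtrees. -/
def IsRootedSubtree (par : W → W) (root : W) (S : Set W) : Prop :=
  ∃ t ∈ S, ∀ x ∈ S, x ≠ t → x ≠ root ∧ par x ∈ S

variable {par : W → W} {root : W}

lemma parentGraph_adj {x y : W} :
    (parentGraph par).Adj x y ↔ x ≠ y ∧ (par x = y ∨ par y = x) :=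
  fromRel_adj _ x y

lemma parentGraph_isLeaf {w : W} (hw : par w ≠ w) (hchild : ∀ u, par u ≠ w) :
    IsLeaf (parentGraph par) w :=
  ⟨par w, parentGraph_adj.2 ⟨hw.symm, Or.inl rfl⟩,
    fun u hu => ((parentGraph_adj.1 hu).2.resolve_right (hchild u)).symm⟩

lemma isRootedSubtree_insert {t : W} {S : Set W} (hS : ∀ x ∈ S, x ≠ root ∧ par x = t) :
    IsRootedSubtree par root (insert t S) := by
  refine ⟨t, Set.mem_insert t S, fun x hx hxt => ?_⟩
  obtain ⟨hxr, hpx⟩ := hS x (hx.resolve_left hxt)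
  exact ⟨hxr, hpx ▸ Set.mem_insert t S⟩

lemma IsParentMap.adj_parent (h : IsParentMap par root) {w : W} (hw : w ≠ root) :
    (parentGraph par).Adj w (par w) := by
  obtain ⟨-, rk, hrk⟩ := h
  refine parentGraph_adj.2 ⟨fun hpw => ?_, Or.inl rfl⟩
  exact (hrk w hw).ne (congrArg rk hpw.symm)

lemma IsParentMap.exists_walk_to_top (h : IsParentMap par root) {S : Set W} {t : W}
    (ht : t ∈ S) (hS : ∀ x ∈ S, x ≠ t → x ≠ root ∧ par x ∈ S) {x : W} (hx : x ∈ S) :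
    ∃ p : (parentGraph par).Walk x t, ∀ v ∈ p.support, v ∈ S := by
  obtain ⟨-, rk, hrk⟩ := id h
  induction hn : rk x using Nat.strong_induction_on generalizing x with
  | _ n ih =>
    by_cases hxt : x = t
    · subst hxt
      exact ⟨.nil, by simpa using hx⟩
    obtain ⟨hxr, hpx⟩ := hS x hx hxt
    obtain ⟨p, hp⟩ := ih _ (hn ▸ hrk x hxr) hpx rfl
    refine ⟨.cons (h.adj_parent hxr) p, ?_⟩
    simpa only [Walk.support_cons, List.mem_cons, forall_eq_or_imp] using ⟨hx, hp⟩

lemma IsRootedSubtree.exists_walk {S : Set W} (hS : IsRootedSubtree par root S)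
    (h : IsParentMap par root) {x y : W} (hx : x ∈ S) (hy : y ∈ S) :
    ∃ p : (parentGraph par).Walk x y, ∀ v ∈ p.support, v ∈ S := by
  obtain ⟨t, ht, hS⟩ := hS
  obtain ⟨p, hp⟩ := h.exists_walk_to_top ht hS hx
  obtain ⟨p', hp'⟩ := h.exists_walk_to_top ht hS hy
  refine ⟨p.append p'.reverse, fun v hv => ?_⟩
  rw [Walk.mem_support_append_iff, Walk.support_reverse, List.mem_reverse] at hv
  exact hv.elim (hp v) (hp' v)

/-- Every walk leaving the descendants of `w` crosses the edge from `w` to its parent. -/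
lemma IsParentMap.isBridge (h : IsParentMap par root) {w : W} (hw : w ≠ root) :
    (parentGraph par).IsBridge s(w, par w) := by
  obtain ⟨hroot, rk, hrk⟩ := id h
  have hrk_iterate : ∀ n x, rk (par^[n] x) ≤ rk x := by
    intro n
    induction n with
    | zero => exact fun _ => le_rfl
    | succ n ih =>
      intro x
      rw [Function.iterate_succ_apply]
      refine (ih _).trans ?_
      by_cases hx : x = root
      · rw [hx, hroot]
      · exact (hrk x hx).le
  set D : Set W := {x | ∃ n, par^[n] x = w}
  have hD_parent : ∀ x, par x ∈ D → x ∈ D := fun x ⟨n, hn⟩ => ⟨n + 1, hn⟩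
  rw [isBridge_iff_forall_walk_mem_edges]
  intro p
  have hpw : par w ∉ D := by
    rintro ⟨n, hn⟩
    have := hrk_iterate n (par w)
    rw [hn] at this
    exact (hrk w hw).not_ge this
  obtain ⟨d, hd, ⟨n, hn⟩, hsnd⟩ := p.exists_boundary_dart D ⟨0, rfl⟩ hpw
  rcases (parentGraph_adj.1 d.adj).2 with hpar | hpar
  · cases n with
    | zero =>
      have hedge : d.edge = s(w, par w) := by
        rw [Dart.edge, ← hn, Function.iterate_zero_apply, hpar]
      exact hedge ▸ List.mem_map_of_mem hd
    | succ n => exact absurd ⟨n, hpar ▸ hn⟩ hsnd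
  · exact absurd (hD_parent _ (hpar ▸ ⟨n, hn⟩)) hsnd

lemma IsParentMap.isAcyclic (h : IsParentMap par root) : (parentGraph par).IsAcyclic := by
  rw [isAcyclic_iff_forall_adj_isBridge]
  intro x y hxy
  obtain ⟨hne, rfl | rfl⟩ := parentGraph_adj.1 hxy
  · exact h.isBridge fun hx => hne (hx ▸ h.1.symm)
  · rw [Sym2.eq_swap]
    exact h.isBridge fun hy => hne (hy ▸ h.1)

lemma IsParentMap.isTree (h : IsParentMap par root) : (parentGraph par).IsTree := by
  have huniv : IsRootedSubtree par root Set.univ :=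
    ⟨root, trivial, fun _ _ hx => ⟨hx, trivial⟩⟩
  have : Nonempty W := ⟨root⟩
  exact ⟨⟨fun x y => ⟨(huniv.exists_walk h trivial trivial).choose⟩⟩, h.isAcyclic⟩

end ParentGraph

section Quartets

variable {W : Type}

lemma ContainsQuartet.disjoint_support {T : SimpleGraph W} {a b c d : W}
    (h : ContainsQuartet T a b c d) {p : T.Walk a b} {p' : T.Walk c d} (hp : p.IsPath)
    (hp' : p'.IsPath) : p.support.Disjoint p'.support :=
  fun v hv hv' => h.2.2.2.2.2.2 p p' hp hp' v hv hv'

lemma containsQuartet_of_disjoint_walks {T : SimpleGraph W} (hT : T.IsTree) {a b c d : W}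
    (ha : IsLeaf T a) (hb : IsLeaf T b) (hc : IsLeaf T c) (hd : IsLeaf T d) (hab : a ≠ b)
    (hcd : c ≠ d) (p : T.Walk a b) (p' : T.Walk c d) (hpp' : p.support.Disjoint p'.support) :
    ContainsQuartet T a b c d := by
  classical
  refine ⟨ha, hb, hc, hd, hab, hcd, fun p₀ p₀' hp₀ hp₀' v hv hv' => hpp' (a := v) ?_ ?_⟩
  · rw [(hT.existsUnique_path a b).unique hp₀ p.bypass_isPath] at hv
    exact p.support_bypass_subset_support hv
  · rw [(hT.existsUnique_path c d).unique hp₀' p'.bypass_isPath] at hv'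
    exact p'.support_bypass_subset_support hv'

lemma not_disjoint_support_of_isAcyclic {G : SimpleGraph W} (hG : G.IsAcyclic) {a b c d : W}
    (P : G.Walk a c) (S : G.Walk b d) (p : G.Walk a b) (p' : G.Walk c d)
    (hPS : P.support.Disjoint S.support) : ¬ p.support.Disjoint p'.support := by
  classical
  intro hpp'
  -- the path from `a` to `d` runs inside both `p ∪ S` and `P ∪ p'`
  have hpath : (p.append S).bypass = (P.append p').bypass :=
    congrArg Subtype.val ((hG.subsingleton_path a d).elim
      ⟨_, (p.append S).bypass_isPath⟩ ⟨_, (P.append p').bypass_isPath⟩)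
  set X : Set W := {v | v ∈ p.support ∧ v ∈ P.support}
  obtain ⟨e, he, ⟨hxp, hxP⟩, hyX⟩ := (p.append S).bypass.exists_boundary_dart X
    ⟨p.start_mem_support, P.start_mem_support⟩ fun hd => hpp' hd.1 p'.end_mem_support
  have hy := (p.append S).bypass.dart_snd_mem_support_of_mem_darts he
  have hy₁ := (p.append S).support_bypass_subset_support hy
  rw [hpath] at hy
  have hy₂ := (P.append p').support_bypass_subset_support hy
  rw [Walk.mem_support_append_iff] at hy₁ hy₂
  have hyS : e.snd ∈ S.support :=
    hy₁.resolve_left fun hyp => hpp' hyp (hy₂.resolve_left fun hyP => hyX ⟨hyp, hyP⟩)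
  -- the edge `e` is a bridge, yet `P`, `p` and `S` connect its ends without using it
  have hbridge := isAcyclic_iff_forall_adj_isBridge.1 hG e.adj
  rw [isBridge_iff_forall_walk_mem_edges] at hbridge
  have hmem := hbridge (((P.takeUntil _ hxP).reverse.append p).append (S.takeUntil _ hyS))
  simp only [Walk.edges_append, Walk.edges_reverse, List.mem_append, List.mem_reverse] at hmem
  rcases hmem with (hmem | hmem) | hmem
  · exact hPS (P.snd_mem_support_of_mem_edges (P.edges_takeUntil_subset_edges _ hmem)) hyS
  · exact hpp' (p.snd_mem_support_of_mem_edges hmem)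
      (hy₂.resolve_left fun hyP => hPS hyP hyS)
  · exact hPS hxP (S.fst_mem_support_of_mem_edges (S.edges_takeUntil_subset_edges _ hmem))

lemma exists_walk_of_chain {G : SimpleGraph W} {n : ℕ} (x : Fin (n + 1) → W) {U : Set W}
    (h₀ : x 0 ∈ U)
    (hstep : ∀ i : Fin n, ∃ p : G.Walk (x i.castSucc) (x i.succ), ∀ v ∈ p.support, v ∈ U) :
    ∃ p : G.Walk (x 0) (x (Fin.last n)), ∀ v ∈ p.support, v ∈ U := by
  suffices ∀ k, ∃ p : G.Walk (x 0) (x k), ∀ v ∈ p.support, v ∈ U from this _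
  intro k
  induction k using Fin.induction with
  | zero => exact ⟨.nil, by simpa using h₀⟩
  | succ i ih =>
    obtain ⟨p, hp⟩ := ih
    obtain ⟨p', hp'⟩ := hstep i
    refine ⟨p.append p', fun v hv => ?_⟩
    exact (Walk.mem_support_append_iff _ _).1 hv |>.elim (hp v) (hp' v)

end Quartets

theorem not_compatibleFam_shuttersQ {α : Type} {r q : ℕ} (hr : 2 ≤ r) (hq : 2 ≤ q)
    (a : Fin r → α) (b : Fin q → α) : ¬ CompatibleFam (shuttersQ r q a b) := by
  rintro ⟨W, T, ι, hT, -, hQ⟩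
  obtain ⟨m, rfl⟩ : ∃ m, r = m + 1 := ⟨r - 1, by omega⟩
  obtain ⟨n, rfl⟩ : ∃ n, q = n + 1 := ⟨q - 1, by omega⟩
  choose path hpath using fun x y : W => (hT.existsUnique_path x y).exists
  set U := {v | ∃ i : Fin m, v ∈ (path (ι (a i.castSucc)) (ι (a i.succ))).support}
  set V := {v | ∃ j : Fin n, v ∈ (path (ι (b j.castSucc)) (ι (b j.succ))).support}
  obtain ⟨P, hP⟩ := exists_walk_of_chain (G := T) (ι ∘ a) (U := U)
    ⟨⟨0, by omega⟩, by simp⟩ fun i => ⟨_, fun v hv => ⟨i, hv⟩⟩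
  obtain ⟨S, hS⟩ := exists_walk_of_chain (G := T) (ι ∘ b) (U := V)
    ⟨⟨0, by omega⟩, by simp⟩ fun j => ⟨_, fun v hv => ⟨j, hv⟩⟩
  have hspecial := hQ _ (Or.inr ⟨0, Fin.last m, 0, Fin.last n, rfl, by simp, rfl, by simp, rfl⟩)
  refine not_disjoint_support_of_isAcyclic hT.isAcyclic P S (path _ _) (path _ _) ?_
    (hspecial.disjoint_support (hpath _ _) (hpath _ _))
  intro v hvP hvS
  obtain ⟨i, hi⟩ := hP v hvP
  obtain ⟨j, hj⟩ := hS v hvS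
  exact (hQ _ (Or.inl ⟨_, _, _, _, Fin.val_succ i, Fin.val_succ j, rfl⟩)).disjoint_support
    (hpath _ _) (hpath _ _) hi hj

section AttachLeaves

variable {α N : Type} {par : N → N} {root : N}

def attachLeaves (att : α → N) (par : N → N) : α ⊕ N → α ⊕ N :=
  Sum.elim (fun z => .inr (att z)) (fun x => .inr (par x))

lemma isParentMap_attachLeaves (h : IsParentMap par root) (att : α → N) :
    IsParentMap (attachLeaves att par) (.inr root) := by
  obtain ⟨hroot, rk, hrk⟩ := h
  refine ⟨congrArg Sum.inr hroot, Sum.elim (fun z => rk (att z) + 1) rk, ?_⟩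
  rintro (z | x) hx
  · exact Nat.lt_succ_self _
  · exact hrk x fun hxr => hx (congrArg Sum.inr hxr)

lemma isRootedSubtree_attachLeaves {S : Set N} (hS : IsRootedSubtree par root S) (att : α → N) :
    IsRootedSubtree (attachLeaves att par) (.inr root) (Sum.elim att id ⁻¹' S) := by
  obtain ⟨t, ht, hS⟩ := hS
  refine ⟨.inr t, ht, ?_⟩
  rintro (z | x) hx hxt
  · exact ⟨Sum.inl_ne_inr, hx⟩
  · obtain ⟨hxr, hpx⟩ := hS x hx fun hxt' => hxt (congrArg Sum.inr hxt')
    exact ⟨fun hxr' => hxr (Sum.inr_injective hxr'), hpx⟩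

lemma isLeaf_inl_attachLeaves (att : α → N) (par : N → N) (z : α) :
    IsLeaf (parentGraph (attachLeaves att par)) (.inl z) :=
  parentGraph_isLeaf Sum.inr_ne_inl fun u => by cases u <;> exact Sum.inr_ne_inl

lemma IsParentMap.containsQuartet_attachLeaves (h : IsParentMap par root) {att : α → N}
    {S S' : Set N} (hS : IsRootedSubtree par root S) (hS' : IsRootedSubtree par root S')
    (hSS' : Disjoint S S') {x y z w : α} (hxy : x ≠ y) (hzw : z ≠ w) (hx : att x ∈ S)
    (hy : att y ∈ S) (hz : att z ∈ S') (hw : att w ∈ S') :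
    ContainsQuartet (parentGraph (attachLeaves att par)) (.inl x) (.inl y) (.inl z) (.inl w) := by
  have h' := isParentMap_attachLeaves h att
  obtain ⟨p, hp⟩ := (isRootedSubtree_attachLeaves hS att).exists_walk h'
    (x := .inl x) (y := .inl y) hx hy
  obtain ⟨p', hp'⟩ := (isRootedSubtree_attachLeaves hS' att).exists_walk h'
    (x := .inl z) (y := .inl w) hz hw
  exact containsQuartet_of_disjoint_walks h'.isTree (isLeaf_inl_attachLeaves _ _ _)
    (isLeaf_inl_attachLeaves _ _ _) (isLeaf_inl_attachLeaves _ _ _)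
    (isLeaf_inl_attachLeaves _ _ _) (Sum.inl_injective.ne hxy) (Sum.inl_injective.ne hzw) p p'
    fun v hv hv' => Set.disjoint_left.1 hSS' (hp v hv) (hp' v hv')

end AttachLeaves

inductive Node
  | hub
  | hub'
  | leg (s : Bool) (i : ℕ)

/-- Leg `s` has the nodes `0, …, n s - 1`. The nodes up to the cut `c s` form a path hanging from
`hub` by node `0`, the others a path hanging from `hub'` by node `n s - 1`; so leg `s` together with
the edge `hub hub'` is a cycle broken between the nodes `c s` and `c s + 1`. -/
def cutParent (n c : Bool → ℕ) : Node → Node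
  | .hub => .hub
  | .hub' => .hub
  | .leg s i =>
    if i ≤ c s then (if i = 0 then .hub else .leg s (i - 1))
    else if i + 1 < n s then .leg s (i + 1) else .hub'

lemma isParentMap_cutParent (n c : Bool → ℕ) : IsParentMap (cutParent n c) .hub := by
  refine ⟨rfl, fun
    | .hub => 0
    | .hub' => 1
    | .leg s i => if i ≤ c s then i + 1 else n s - i + 2, ?_⟩
  rintro (_ | _ | ⟨s, i⟩) h
  · exact absurd rfl h
  · simp [cutParent]
  · simp only [cutParent]
    split_ifs <;> dsimp only <;> (try split_ifs) <;> omega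

section CutParent

variable {n c : Bool → ℕ} {s : Bool}

lemma cutParent_leg_zero : cutParent n c (.leg s 0) = .hub := by
  simp [cutParent]

lemma cutParent_leg_succ_of_lt {i : ℕ} (hi : i < c s) :
    cutParent n c (.leg s (i + 1)) = .leg s i := by
  simp [cutParent, Nat.succ_le_of_lt hi]

lemma cutParent_leg_of_gt {i : ℕ} (hi : c s < i) (hin : i + 1 < n s) :
    cutParent n c (.leg s i) = .leg s (i + 1) := by
  simp [cutParent, Nat.not_le.2 hi, hin]

lemma cutParent_leg_last {m : ℕ} (hm : m + 1 = n s) (hc : c s < m) :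
    cutParent n c (.leg s m) = .hub' := by
  simp [cutParent, Nat.not_le.2 hc, hm]

end CutParent

/-- Contains the tree path between the nodes `i` and `i + 1` of leg `s`, which runs through `hub`
and `hub'` when it crosses the cut. -/
def legSpan (c : Bool → ℕ) (s : Bool) (i : ℕ) : Set Node :=
  if i = c s then {x | ∀ k, x ≠ .leg (!s) k} else {.leg s i, .leg s (i + 1)}

lemma leg_mem_legSpan (c : Bool → ℕ) (s : Bool) (i : ℕ) :
    .leg s i ∈ legSpan c s i ∧ .leg s (i + 1) ∈ legSpan c s i := by
  unfold legSpan
  split_ifs <;> simp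

lemma isRootedSubtree_legSpan {n c : Bool → ℕ} {s : Bool} {i : ℕ} (hi : i + 1 < n s) :
    IsRootedSubtree (cutParent n c) .hub (legSpan c s i) := by
  unfold legSpan
  split_ifs with hic
  · refine ⟨.hub, by simp, ?_⟩
    rintro (_ | _ | ⟨s', k⟩) hx hxt
    · exact absurd rfl hxt
    · simp [cutParent]
    · simp only [Set.mem_ofPred_eq, ne_eq, Node.leg.injEq, not_and, cutParent] at hx ⊢
      split_ifs <;> simp_all
  · rcases Nat.lt_or_gt_of_ne hic with hlt | hgt
    · exact isRootedSubtree_insert (by simp [cutParent_leg_succ_of_lt hlt])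
    · rw [Set.pair_comm]
      exact isRootedSubtree_insert (by simp [cutParent_leg_of_gt hgt hi])

lemma disjoint_legSpan {c : Bool → ℕ} {i j : ℕ} (h : i ≠ c true ∨ j ≠ c false) :
    Disjoint (legSpan c true i) (legSpan c false j) := by
  unfold legSpan
  split_ifs <;> simp_all [Set.disjoint_left]

section CutTree

variable {α : Type} {r q : ℕ} (a : Fin r → α) (b : Fin q → α)

noncomputable def legAttach : α → Node :=
  Function.extend (Sum.elim a b) (Sum.elim (fun i => .leg true i) (fun j => .leg false j))
    fun _ => .hub

noncomputable def cutTree (I J : ℕ) : SimpleGraph (α ⊕ Node) :=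
  parentGraph (attachLeaves (legAttach a b)
    (cutParent (fun s => bif s then r else q) (fun s => bif s then I else J)))

variable {a b}

lemma legAttach_left (hinj : Function.Injective (Sum.elim a b)) (i : Fin r) :
    legAttach a b (a i) = .leg true i :=
  hinj.extend_apply _ _ (.inl i)

lemma legAttach_right (hinj : Function.Injective (Sum.elim a b)) (j : Fin q) :
    legAttach a b (b j) = .leg false j :=
  hinj.extend_apply _ _ (.inr j)

lemma isTree_cutTree (I J : ℕ) : (cutTree a b I J).IsTree :=
  (isParentMap_attachLeaves (isParentMap_cutParent _ _) _).isTree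

lemma cutTree_containsQuartet_grid (hinj : Function.Injective (Sum.elim a b)) {I J : ℕ}
    {i i' : Fin r} {j j' : Fin q} (hi : i'.val = i.val + 1) (hj : j'.val = j.val + 1)
    (hcut : i.val ≠ I ∨ j.val ≠ J) :
    ContainsQuartet (cutTree a b I J) (.inl (a i)) (.inl (a i')) (.inl (b j)) (.inl (b j')) := by
  have ha := hinj.comp Sum.inl_injective
  have hb := hinj.comp Sum.inr_injective
  refine (isParentMap_cutParent _ _).containsQuartet_attachLeaves
    (isRootedSubtree_legSpan (s := true) (show i.val + 1 < r by omega))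
    (isRootedSubtree_legSpan (s := false) (show j.val + 1 < q by omega)) (disjoint_legSpan hcut)
    (ha.ne (Fin.ne_of_val_ne (by omega))) (hb.ne (Fin.ne_of_val_ne (by omega))) ?_ ?_ ?_ ?_
  · rw [legAttach_left hinj]
    exact (leg_mem_legSpan _ _ _).1
  · rw [legAttach_left hinj, hi]
    exact (leg_mem_legSpan _ _ _).2
  · rw [legAttach_right hinj]
    exact (leg_mem_legSpan _ _ _).1
  · rw [legAttach_right hinj, hj]
    exact (leg_mem_legSpan _ _ _).2

lemma cutTree_containsQuartet_special (hinj : Function.Injective (Sum.elim a b)) {I J : ℕ}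
    (hI : I + 1 < r) (hJ : J + 1 < q) {i₀ i₁ : Fin r} {j₀ j₁ : Fin q} (hi₀ : i₀.val = 0)
    (hi₁ : i₁.val = r - 1) (hj₀ : j₀.val = 0) (hj₁ : j₁.val = q - 1) :
    ContainsQuartet (cutTree a b I J) (.inl (a i₀)) (.inl (b j₀)) (.inl (a i₁)) (.inl (b j₁)) := by
  have hab : ∀ i j, a i ≠ b j := fun i j h => Sum.inl_ne_inr (hinj h)
  refine (isParentMap_cutParent _ _).containsQuartet_attachLeaves
    (S := {.hub, .leg true 0, .leg false 0}) (S' := {.hub', .leg true (r - 1), .leg false (q - 1)})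
    (isRootedSubtree_insert (by simp [cutParent_leg_zero]))
    (isRootedSubtree_insert (by
      simp [cutParent_leg_last, show r - 1 + 1 = r by omega, show I < r - 1 by omega,
        show q - 1 + 1 = q by omega, show J < q - 1 by omega]))
    (by simp [Set.disjoint_left, (show 0 < r - 1 by omega).ne, (show 0 < q - 1 by omega).ne])
    (hab _ _) (hab _ _) ?_ ?_ ?_ ?_
  all_goals simp [legAttach_left hinj, legAttach_right hinj, hi₀, hi₁, hj₀, hj₁]

end CutTree

lemma CompatibleFam.mono {α : Type} {Q Q' : Set (α × α × α × α)} (h : CompatibleFam Q)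
    (hQ' : Q' ⊆ Q) : CompatibleFam Q' :=
  let ⟨W, T, ι, hT, hι, hQ⟩ := h
  ⟨W, T, ι, hT, hι, fun t ht => hQ t (hQ' ht)⟩

theorem compatibleFam_shuttersQ_diff_singleton {α : Type} {r q : ℕ} {a : Fin r → α}
    {b : Fin q → α} (hinj : Function.Injective (Sum.elim a b)) {t : α × α × α × α}
    (ht : t ∈ shuttersQ r q a b) : CompatibleFam (shuttersQ r q a b \ {t}) := by
  rcases ht with ⟨I, I', J, J', hI, hJ, rfl⟩ | ⟨i₀, i₁, j₀, j₁, hi₀, hi₁, hj₀, hj₁, rfl⟩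
  · refine ⟨_, cutTree a b I J, Sum.inl, isTree_cutTree _ _, Sum.inl_injective, ?_⟩
    rintro _ ⟨⟨i, i', j, j', hi, hj, rfl⟩ | ⟨i₀, i₁, j₀, j₁, hi₀, hi₁, hj₀, hj₁, rfl⟩, hne⟩
    · refine cutTree_containsQuartet_grid hinj hi hj (not_and_or.1 fun ⟨hiI, hjJ⟩ => hne ?_)
      obtain rfl : i = I := Fin.ext hiI
      obtain rfl : i' = I' := Fin.ext (by omega)
      obtain rfl : j = J := Fin.ext hjJ
      obtain rfl : j' = J' := Fin.ext (by omega)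
      rfl
    · exact cutTree_containsQuartet_special hinj (by omega) (by omega) hi₀ hi₁ hj₀ hj₁
  · refine ⟨_, cutTree a b (r - 1) (q - 1), Sum.inl, isTree_cutTree _ _, Sum.inl_injective, ?_⟩
    rintro _ ⟨⟨i, i', j, j', hi, hj, rfl⟩ | ⟨i₂, i₃, j₂, j₃, hi₂, hi₃, hj₂, hj₃, rfl⟩, hne⟩
    · exact cutTree_containsQuartet_grid hinj hi hj (Or.inl (by omega))
    · obtain rfl : i₂ = i₀ := Fin.ext (by omega)
      obtain rfl : i₃ = i₁ := Fin.ext (by omega)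
      obtain rfl : j₂ = j₀ := Fin.ext (by omega)
      obtain rfl : j₃ = j₁ := Fin.ext (by omega)
      exact absurd rfl hne

/-- for `r, q ≥ 3` and distinct elements `a_1, …, a_r, b_1, …, b_q`,
the quartet set `Q = { a_i a_{i+1} | b_j b_{j+1} } ∪ { a_1 b_1 | a_r b_q }` is
incompatible, and every proper subset of `Q` is compatible. -/
theorem stmt_11 {α : Type} (r q : ℕ) (hr : 3 ≤ r) (hq : 3 ≤ q)
    (a : Fin r → α) (b : Fin q → α)
    (hinj : Function.Injective (Sum.elim a b)) :
    ¬ CompatibleFam (shuttersQ r q a b) ∧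
      ∀ Q' : Set (α × α × α × α), Q' ⊂ shuttersQ r q a b → CompatibleFam Q' := by
  refine ⟨not_compatibleFam_shuttersQ (by omega) (by omega) a b, fun Q' hQ' => ?_⟩
  obtain ⟨t, ht, htQ'⟩ := Set.exists_of_ssubset hQ'
  exact (compatibleFam_shuttersQ_diff_singleton hinj ht).mono
    (Set.subset_sdiff_singleton hQ'.subset htQ')

end LeafPaper
end

section
/- For all integers r, q ≥ 3, the graph G_{r,q} is strongly chordal. -/
open SimpleGraph

namespace LeafPaper

/-- The vertex type of the graph `G_{r,q}`: the clique vertices `a_1, …, a_r` and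
`b_1, …, b_q` together with the degree-two vertices `x_1, …, x_{r-1}` and
`y_1, …, y_{q-1}`. -/
abbrev GrqVertex (r q : ℕ) : Type := (Fin r ⊕ Fin (r - 1)) ⊕ (Fin q ⊕ Fin (q - 1))

/-- The vertex `a_{i+1}` of `G_{r,q}` (`0`-based indexing). -/
def av (r q : ℕ) (i : Fin r) : GrqVertex r q := Sum.inl (Sum.inl i)
/-- The vertex `x_{k+1}` of `G_{r,q}` (`0`-based indexing). -/
def xv (r q : ℕ) (k : Fin (r - 1)) : GrqVertex r q := Sum.inl (Sum.inr k)
/-- The vertex `b_{j+1}` of `G_{r,q}` (`0`-based indexing). -/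
def bv (r q : ℕ) (j : Fin q) : GrqVertex r q := Sum.inr (Sum.inl j)
/-- The vertex `y_{k+1}` of `G_{r,q}` (`0`-based indexing). -/
def yv (r q : ℕ) (k : Fin (q - 1)) : GrqVertex r q := Sum.inr (Sum.inr k)

/-- The adjacency relation of `G_{r,q}`: the `a`'s and `b`'s form a clique minus the
four edges `a_1 a_r`, `a_1 b_q`, `b_1 b_q`, `b_1 a_r`; each `x_k` is adjacent exactly
to `a_k` and `a_{k+1}`; each `y_k` is adjacent exactly to `b_k` and `b_{k+1}`. -/
def grqRel (r q : ℕ) : GrqVertex r q → GrqVertex r q → Prop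
  | Sum.inl (Sum.inl i), Sum.inl (Sum.inl i') =>
      ¬((i.val = 0 ∧ i'.val = r - 1) ∨ (i.val = r - 1 ∧ i'.val = 0))
  | Sum.inr (Sum.inl j), Sum.inr (Sum.inl j') =>
      ¬((j.val = 0 ∧ j'.val = q - 1) ∨ (j.val = q - 1 ∧ j'.val = 0))
  | Sum.inl (Sum.inl i), Sum.inr (Sum.inl j) =>
      ¬((i.val = 0 ∧ j.val = q - 1) ∨ (i.val = r - 1 ∧ j.val = 0))
  | Sum.inr (Sum.inl j), Sum.inl (Sum.inl i) =>
      ¬((i.val = 0 ∧ j.val = q - 1) ∨ (i.val = r - 1 ∧ j.val = 0))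
  | Sum.inl (Sum.inl i), Sum.inl (Sum.inr k) => i.val = k.val ∨ i.val = k.val + 1
  | Sum.inl (Sum.inr k), Sum.inl (Sum.inl i) => i.val = k.val ∨ i.val = k.val + 1
  | Sum.inr (Sum.inl j), Sum.inr (Sum.inr k) => j.val = k.val ∨ j.val = k.val + 1
  | Sum.inr (Sum.inr k), Sum.inr (Sum.inl j) => j.val = k.val ∨ j.val = k.val + 1
  | _, _ => False

/-- The graph `G_{r,q}`. -/
def Grq (r q : ℕ) : SimpleGraph (GrqVertex r q) := SimpleGraph.fromRel (grqRel r q)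

/-- `G` has an induced cycle on `n` vertices. -/
def HasInducedCycle {V : Type} (G : SimpleGraph V) (n : ℕ) : Prop :=
  ∃ φ : ZMod n → V, Function.Injective φ ∧
    ∀ i j : ZMod n, i ≠ j → (G.Adj (φ i) (φ j) ↔ (j = i + 1 ∨ i = j + 1))

/-- A graph is chordal if it has no induced cycle on four or more vertices. -/
def IsChordal {V : Type} (G : SimpleGraph V) : Prop :=
  ∀ n : ℕ, 4 ≤ n → ¬ HasInducedCycle G n

/-- `G` has an induced subgraph isomorphic to the `k`-sun `S_k`: a clique
`c 0, …, c (k-1)` together with an independent set `s 0, …, s (k-1)` where `s i` is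
adjacent exactly to `c i` and `c (i+1)` (indices mod `k`). -/
def HasInducedSun {V : Type} (G : SimpleGraph V) (k : ℕ) : Prop :=
  ∃ c s : ZMod k → V, Function.Injective (Sum.elim c s) ∧
    (∀ i j : ZMod k, i ≠ j → G.Adj (c i) (c j)) ∧
    (∀ i j : ZMod k, G.Adj (s i) (c j) ↔ (j = i ∨ j = i + 1)) ∧
    (∀ i j : ZMod k, i ≠ j → ¬ G.Adj (s i) (s j))

/-- A graph is strongly chordal if it is chordal and sun-free. -/
def IsStronglyChordal {V : Type} (G : SimpleGraph V) : Prop :=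
  IsChordal G ∧ ∀ k : ℕ, 3 ≤ k → ¬ HasInducedSun G k

-- auxiliary

lemma zmod_natCast_inj {n a b : ℕ} (ha : a < n) (hb : b < n) (h : (a : ZMod n) = b) : a = b := by
  haveI : NeZero n := ⟨by omega⟩
  have h2 := congrArg ZMod.val h
  rwa [ZMod.val_cast_of_lt ha, ZMod.val_cast_of_lt hb] at h2

lemma lit_ne {n a b : ℕ} (ha : a < n) (hb : b < n) (hab : a ≠ b) :
    (a : ZMod n) ≠ (b : ZMod n) := fun h => hab (zmod_natCast_inj ha hb h)

lemma shift_ne {k : ℕ} (i : ZMod k) {a b : ZMod k} (h : a ≠ b) : i + a ≠ i + b :=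
  fun h' => h (add_left_cancel h')

lemma shift_ne' {k : ℕ} (i : ZMod k) {a b : ℕ} (ha : a < k) (hb : b < k) (hab : a ≠ b) :
    i + (a : ZMod k) ≠ i + (b : ZMod k) := shift_ne i (lit_ne ha hb hab)

def nuv (r q : ℕ) : GrqVertex r q → ℕ
  | Sum.inl (Sum.inl i) => i.val
  | Sum.inr (Sum.inl j) => r + 1 + j.val
  | _ => 0

def IsCl {r q : ℕ} (v : GrqVertex r q) : Prop :=
  (∃ i, v = av r q i) ∨ (∃ j, v = bv r q j)

@[simp] lemma nuv_av {r q : ℕ} (i : Fin r) : nuv r q (av r q i) = i.val := rfl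
@[simp] lemma nuv_bv {r q : ℕ} (j : Fin q) : nuv r q (bv r q j) = r + 1 + j.val := rfl

lemma adj_aa {r q : ℕ} (i i' : Fin r) :
    (Grq r q).Adj (av r q i) (av r q i') ↔
    i.val ≠ i'.val ∧ ¬((i.val = 0 ∧ i'.val = r - 1) ∨ (i.val = r - 1 ∧ i'.val = 0)) := by
  simp only [Grq, fromRel_adj, av, ne_eq, Sum.inl.injEq, grqRel, Fin.ext_iff]
  tauto

lemma adj_bb {r q : ℕ} (j j' : Fin q) :
    (Grq r q).Adj (bv r q j) (bv r q j') ↔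
    j.val ≠ j'.val ∧ ¬((j.val = 0 ∧ j'.val = q - 1) ∨ (j.val = q - 1 ∧ j'.val = 0)) := by
  simp only [Grq, fromRel_adj, bv, ne_eq, Sum.inr.injEq, Sum.inl.injEq, grqRel, Fin.ext_iff]
  tauto

lemma adj_ab {r q : ℕ} (i : Fin r) (j : Fin q) :
    (Grq r q).Adj (av r q i) (bv r q j) ↔
    ¬((i.val = 0 ∧ j.val = q - 1) ∨ (i.val = r - 1 ∧ j.val = 0)) := by
  simp only [Grq, fromRel_adj, av, bv, ne_eq, grqRel]
  simp

lemma adj_ba {r q : ℕ} (j : Fin q) (i : Fin r) :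
    (Grq r q).Adj (bv r q j) (av r q i) ↔
    ¬((i.val = 0 ∧ j.val = q - 1) ∨ (i.val = r - 1 ∧ j.val = 0)) := by
  rw [SimpleGraph.adj_comm, adj_ab]

lemma adj_x {r q : ℕ} {m : Fin (r - 1)} {u : GrqVertex r q}
    (h : (Grq r q).Adj (xv r q m) u) :
    ∃ i : Fin r, u = av r q i ∧ (i.val = m.val ∨ i.val = m.val + 1) := by
  rcases u with (i | m') | (j | m')
  · refine ⟨i, rfl, ?_⟩
    simp only [Grq, fromRel_adj, xv, grqRel] at h
    tauto
  · simp [Grq, fromRel_adj, xv, grqRel] at h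
  · simp [Grq, fromRel_adj, xv, grqRel] at h
  · simp [Grq, fromRel_adj, xv, grqRel] at h

lemma adj_y {r q : ℕ} {m : Fin (q - 1)} {u : GrqVertex r q}
    (h : (Grq r q).Adj (yv r q m) u) :
    ∃ j : Fin q, u = bv r q j ∧ (j.val = m.val ∨ j.val = m.val + 1) := by
  rcases u with (i | m') | (j | m')
  · simp [Grq, fromRel_adj, yv, grqRel] at h
  · simp [Grq, fromRel_adj, yv, grqRel] at h
  · refine ⟨j, rfl, ?_⟩
    simp only [Grq, fromRel_adj, yv, grqRel] at h
    tauto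
  · simp [Grq, fromRel_adj, yv, grqRel] at h

lemma not_cl {r q : ℕ} {v : GrqVertex r q} (h : ¬ IsCl v) :
    (∃ m, v = xv r q m) ∨ (∃ m, v = yv r q m) := by
  rcases v with (i | m) | (j | m)
  · exact absurd (Or.inl ⟨i, rfl⟩) h
  · exact Or.inl ⟨m, rfl⟩
  · exact absurd (Or.inr ⟨j, rfl⟩) h
  · exact Or.inr ⟨m, rfl⟩

lemma nuv_facts {r q : ℕ} {v : GrqVertex r q} (h : IsCl v) :
    nuv r q v ≤ r + q ∧ nuv r q v ≠ r := by
  rcases h with ⟨i, rfl⟩ | ⟨j, rfl⟩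
  · have := i.isLt; simp only [nuv_av]; omega
  · have := j.isLt; simp only [nuv_bv]; omega

lemma nuv_inj {r q : ℕ} {u v : GrqVertex r q} (hu : IsCl u) (hv : IsCl v)
    (h : nuv r q u = nuv r q v) : u = v := by
  rcases hu with ⟨i, rfl⟩ | ⟨j, rfl⟩ <;> rcases hv with ⟨i', rfl⟩ | ⟨j', rfl⟩
  · simp only [nuv_av] at h
    exact congrArg (av r q) (Fin.ext h)
  · have := i.isLt; simp only [nuv_av, nuv_bv] at h; omega
  · have := i'.isLt; simp only [nuv_av, nuv_bv] at h; omega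
  · simp only [nuv_bv] at h
    have : j.val = j'.val := by omega
    exact congrArg (bv r q) (Fin.ext this)


lemma nonadj_struct {r q : ℕ} {u v : GrqVertex r q}
    (hu : IsCl u) (hv : IsCl v) (hne : u ≠ v) (hadj : ¬ (Grq r q).Adj u v) :
    ((nuv r q u = 0 ∨ nuv r q u = r + 1) ∧ (nuv r q v = r - 1 ∨ nuv r q v = r + q)) ∨
    ((nuv r q v = 0 ∨ nuv r q v = r + 1) ∧ (nuv r q u = r - 1 ∨ nuv r q u = r + q)) := by
  rcases hu with ⟨i, rfl⟩ | ⟨j, rfl⟩ <;> rcases hv with ⟨i', rfl⟩ | ⟨j', rfl⟩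
  · rw [adj_aa] at hadj
    have hvne : i.val ≠ i'.val := by
      simpa [av, Fin.ext_iff] using hne
    have := i.isLt; have := i'.isLt
    simp only [nuv_av]
    tauto
  · rw [adj_ab] at hadj
    rw [not_not] at hadj
    have := i.isLt; have := j'.isLt
    simp only [nuv_av, nuv_bv]
    omega
  · rw [adj_ba] at hadj
    rw [not_not] at hadj
    have := i'.isLt; have := j.isLt
    simp only [nuv_av, nuv_bv]
    omega
  · rw [adj_bb] at hadj
    have hvne : j.val ≠ j'.val := by
      simpa [bv, Fin.ext_iff] using hne
    have := j.isLt; have := j'.isLt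
    simp only [nuv_bv]
    have hpat : (j.val = 0 ∧ j'.val = q - 1) ∨ (j.val = q - 1 ∧ j'.val = 0) := by tauto
    omega

lemma cross_nonadj {r q : ℕ} (hr : 3 ≤ r) (hq : 3 ≤ q) {u v : GrqVertex r q}
    (hu : IsCl u) (hv : IsCl v)
    (h : ((nuv r q u = 0 ∨ nuv r q u = r + 1) ∧ (nuv r q v = r - 1 ∨ nuv r q v = r + q)) ∨
      ((nuv r q v = 0 ∨ nuv r q v = r + 1) ∧ (nuv r q u = r - 1 ∨ nuv r q u = r + q))) :
    ¬ (Grq r q).Adj u v := by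
  rcases hu with ⟨i, rfl⟩ | ⟨j, rfl⟩ <;> rcases hv with ⟨i', rfl⟩ | ⟨j', rfl⟩ <;>
    simp only [nuv_av, nuv_bv] at h
  · rw [adj_aa]
    have := i.isLt; have := i'.isLt
    omega
  · rw [adj_ab]
    have := i.isLt; have := j'.isLt
    omega
  · rw [adj_ba]
    have := i'.isLt; have := j.isLt
    omega
  · rw [adj_bb]
    have := j.isLt; have := j'.isLt
    omega

lemma adj_step {r q : ℕ} {s u v : GrqVertex r q} (hs : ¬ IsCl s)
    (h1 : (Grq r q).Adj s u) (h2 : (Grq r q).Adj s v) (hne : u ≠ v) :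
    IsCl u ∧ IsCl v ∧ (nuv r q u = nuv r q v + 1 ∨ nuv r q v = nuv r q u + 1) := by
  rcases not_cl hs with ⟨m, rfl⟩ | ⟨m, rfl⟩
  · obtain ⟨i, rfl, hi⟩ := adj_x h1
    obtain ⟨i', rfl, hi'⟩ := adj_x h2
    have hne' : i.val ≠ i'.val := by simpa [av, Fin.ext_iff] using hne
    exact ⟨Or.inl ⟨i, rfl⟩, Or.inl ⟨i', rfl⟩, by simp only [nuv_av]; omega⟩
  · obtain ⟨j, rfl, hj⟩ := adj_y h1
    obtain ⟨j', rfl, hj'⟩ := adj_y h2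
    have hne' : j.val ≠ j'.val := by simpa [bv, Fin.ext_iff] using hne
    exact ⟨Or.inr ⟨j, rfl⟩, Or.inr ⟨j', rfl⟩, by simp only [nuv_bv]; omega⟩

lemma adj_adj {r q : ℕ} (hr : 3 ≤ r) (hq : 3 ≤ q) {s u v : GrqVertex r q} (hs : ¬ IsCl s)
    (h1 : (Grq r q).Adj s u) (h2 : (Grq r q).Adj s v) (hne : u ≠ v) :
    (Grq r q).Adj u v := by
  rcases not_cl hs with ⟨m, rfl⟩ | ⟨m, rfl⟩
  · obtain ⟨i, rfl, hi⟩ := adj_x h1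
    obtain ⟨i', rfl, hi'⟩ := adj_x h2
    have hne' : i.val ≠ i'.val := by simpa [av, Fin.ext_iff] using hne
    have := m.isLt
    rw [adj_aa]
    omega
  · obtain ⟨j, rfl, hj⟩ := adj_y h1
    obtain ⟨j', rfl, hj'⟩ := adj_y h2
    have hne' : j.val ≠ j'.val := by simpa [bv, Fin.ext_iff] using hne
    have := m.isLt
    rw [adj_bb]
    omega

lemma deg_two {r q : ℕ} {s u v w : GrqVertex r q} (hs : ¬ IsCl s)
    (h1 : (Grq r q).Adj s u) (h2 : (Grq r q).Adj s v) (h3 : (Grq r q).Adj s w)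
    (huv : u ≠ v) (huw : u ≠ w) (hvw : v ≠ w) : False := by
  rcases not_cl hs with ⟨m, rfl⟩ | ⟨m, rfl⟩
  · obtain ⟨i, rfl, hi⟩ := adj_x h1
    obtain ⟨i', rfl, hi'⟩ := adj_x h2
    obtain ⟨i'', rfl, hi''⟩ := adj_x h3
    have e1 : i.val ≠ i'.val := by simpa [av, Fin.ext_iff] using huv
    have e2 : i.val ≠ i''.val := by simpa [av, Fin.ext_iff] using huw
    have e3 : i'.val ≠ i''.val := by simpa [av, Fin.ext_iff] using hvw
    omega
  · obtain ⟨j, rfl, hj⟩ := adj_y h1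
    obtain ⟨j', rfl, hj'⟩ := adj_y h2
    obtain ⟨j'', rfl, hj''⟩ := adj_y h3
    have e1 : j.val ≠ j'.val := by simpa [bv, Fin.ext_iff] using huv
    have e2 : j.val ≠ j''.val := by simpa [bv, Fin.ext_iff] using huw
    have e3 : j'.val ≠ j''.val := by simpa [bv, Fin.ext_iff] using hvw
    omega

lemma no_cycle {k : ℕ} (hk : 3 ≤ k) (g : ZMod k → ℕ) (hinj : Function.Injective g)
    (hstep : ∀ i, g (i + 1) = g i + 1 ∨ g i = g (i + 1) + 1) : False := by
  haveI : NeZero k := ⟨by omega⟩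
  obtain ⟨i0, -, hmax⟩ := Finset.exists_max_image Finset.univ g ⟨0, Finset.mem_univ 0⟩
  set j := i0 + ((k - 1 : ℕ) : ZMod k) with hj
  have hz : ((k - 1 : ℕ) : ZMod k) + 1 = 0 := by
    have h0 : (((k - 1) + 1 : ℕ) : ZMod k) = 0 := by
      rw [(by omega : k - 1 + 1 = k)]; exact ZMod.natCast_self k
    rwa [Nat.cast_add, Nat.cast_one] at h0
  have hj1 : j + 1 = i0 := by
    rw [hj, add_assoc, hz, add_zero]
  have h1 := hstep i0
  have h2 := hstep j
  rw [hj1] at h2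
  have hne1 : j ≠ i0 + 1 := by
    rw [hj]
    have h := shift_ne' i0 (by omega : k - 1 < k) (by omega : 1 < k) (by omega)
    simpa using h
  have hgne : g j ≠ g (i0 + 1) := fun h => hne1 (hinj h)
  have m1 := hmax (i0 + 1) (Finset.mem_univ _)
  have m2 := hmax j (Finset.mem_univ _)
  omega


set_option maxHeartbeats 2000000 in
/-- for all `r, q ≥ 3`, the graph `G_{r,q}` is strongly chordal. -/
theorem stmt_12 (r q : ℕ) (hr : 3 ≤ r) (hq : 3 ≤ q) :
    IsStronglyChordal (Grq r q) := by
  constructor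
  · -- chordal
    rintro n hn ⟨φ, hinj, hadj⟩
    have hsh : ∀ (i : ZMod n) (a b : ℕ), a < n → b < n → a ≠ b →
        i + (a : ZMod n) ≠ i + (b : ZMod n) :=
      fun i a b ha hb hab => shift_ne' i ha hb hab
    have hA : ∀ i : ZMod n, (Grq r q).Adj (φ i) (φ (i + 1)) := by
      intro i
      refine (hadj i (i + 1) ?_).mpr (Or.inl rfl)
      have h := hsh i 0 1 (by omega) (by omega) (by omega)
      simpa using h
    have hNA2 : ∀ i : ZMod n, ¬ (Grq r q).Adj (φ i) (φ (i + 2)) := by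
      intro i h
      have hne : i ≠ i + 2 := by
        have h2 := hsh i 0 2 (by omega) (by omega) (by omega)
        simpa using h2
      rcases (hadj i (i + 2) hne).mp h with h' | h'
      · have h2 := hsh i 2 1 (by omega) (by omega) (by omega)
        simp only [Nat.cast_ofNat, Nat.cast_one] at h2
        exact h2 h'
      · have h3 : i + 2 + 1 = i + ((3 : ℕ) : ZMod n) := by push_cast; ring
        rw [h3] at h'
        have h2 := hsh i 0 3 (by omega) (by omega) (by omega)
        simp only [Nat.cast_zero, add_zero] at h2
        exact h2 h'
    have hCl : ∀ i : ZMod n, IsCl (φ i) := by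
      intro i
      have key : IsCl (φ ((i - 1) + 1)) := by
        set i' := i - 1 with hi'
        by_contra hs
        have h1 : (Grq r q).Adj (φ (i' + 1)) (φ (i' + 1 + 1)) := hA (i' + 1)
        have h2 : (Grq r q).Adj (φ (i' + 1)) (φ i') := ((hA i').symm)
        have hne : φ (i' + 1 + 1) ≠ φ i' := by
          apply hinj.ne
          have e : i' + 1 + 1 = i' + ((2 : ℕ) : ZMod n) := by push_cast; ring
          rw [e]
          have h3 := hsh i' 2 0 (by omega) (by omega) (by omega)
          simpa using h3
        have hadj' := adj_adj hr hq hs h1 h2 hne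
        have e : i' + 1 + 1 = i' + 2 := by ring
        rw [e] at hadj'
        exact hNA2 i' hadj'.symm
      have e : i - 1 + 1 = i := by ring
      rwa [e] at key
    have hS02 := nonadj_struct (hCl 0) (hCl (0 + 2))
      (hinj.ne (by
        have h2 := hsh 0 0 2 (by omega) (by omega) (by omega)
        simpa only [Nat.cast_zero, add_zero, Nat.cast_ofNat] using h2))
      (hNA2 0)
    have hS13 := nonadj_struct (hCl (0 + 1)) (hCl (0 + 1 + 2))
      (hinj.ne (by
        have h2 := hsh (0 + 1) 0 2 (by omega) (by omega) (by omega)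
        simpa only [Nat.cast_zero, add_zero, Nat.cast_ofNat] using h2))
      (hNA2 (0 + 1))
    have hC01 : ¬ (((nuv r q (φ 0) = 0 ∨ nuv r q (φ 0) = r + 1) ∧
          (nuv r q (φ (0 + 1)) = r - 1 ∨ nuv r q (φ (0 + 1)) = r + q)) ∨
        ((nuv r q (φ (0 + 1)) = 0 ∨ nuv r q (φ (0 + 1)) = r + 1) ∧
          (nuv r q (φ 0) = r - 1 ∨ nuv r q (φ 0) = r + q))) :=
      fun h => cross_nonadj hr hq (hCl 0) (hCl (0 + 1)) h (hA 0)
    have hA12 : (Grq r q).Adj (φ (0 + 1)) (φ (0 + 2)) := by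
      have h := hA (0 + 1)
      have e : (0 : ZMod n) + 1 + 1 = 0 + 2 := by ring
      rwa [e] at h
    have hC12 : ¬ (((nuv r q (φ (0 + 1)) = 0 ∨ nuv r q (φ (0 + 1)) = r + 1) ∧
          (nuv r q (φ (0 + 2)) = r - 1 ∨ nuv r q (φ (0 + 2)) = r + q)) ∨
        ((nuv r q (φ (0 + 2)) = 0 ∨ nuv r q (φ (0 + 2)) = r + 1) ∧
          (nuv r q (φ (0 + 1)) = r - 1 ∨ nuv r q (φ (0 + 1)) = r + q))) :=
      fun h => cross_nonadj hr hq (hCl (0 + 1)) (hCl (0 + 2)) h hA12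
    omega
  · -- sun-free
    rintro k hk ⟨c, s, hinj, hcc, hsc, hss⟩
    have cinj : Function.Injective c := fun a b h => by
      have h2 : Sum.elim c s (Sum.inl a) = Sum.elim c s (Sum.inl b) := h
      simpa using hinj h2
    have hcs : ∀ a b, c a ≠ s b := fun a b h => by
      have h2 : Sum.elim c s (Sum.inl a) = Sum.elim c s (Sum.inr b) := h
      simpa using hinj h2
    have sinj : Function.Injective s := fun a b h => by
      have h2 : Sum.elim c s (Sum.inr a) = Sum.elim c s (Sum.inr b) := h
      simpa using hinj h2
    have hsh : ∀ (i : ZMod k) (a b : ℕ), a < k → b < k → a ≠ b →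
        i + (a : ZMod k) ≠ i + (b : ZMod k) :=
      fun i a b ha hb hab => shift_ne' i ha hb hab
    have ne1 : ∀ i : ZMod k, i ≠ i + 1 := fun i => by
      have h := hsh i 0 1 (by omega) (by omega) (by omega); simpa using h
    have ne2 : ∀ i : ZMod k, i ≠ i + 2 := fun i => by
      have h := hsh i 0 2 (by omega) (by omega) (by omega); simpa using h
    have ne12 : ∀ i : ZMod k, i + 1 ≠ i + 2 := fun i => by
      have h := hsh i 1 2 (by omega) (by omega) (by omega)
      simpa using h
    have hClc : ∀ i, IsCl (c i) := by
      intro i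
      by_contra hcl
      have h1 : (Grq r q).Adj (c i) (c (i + 1)) := hcc i (i + 1) (ne1 i)
      have h2 : (Grq r q).Adj (c i) (c (i + 2)) := hcc i (i + 2) (ne2 i)
      have h3 : (Grq r q).Adj (c i) (s i) := ((hsc i i).mpr (Or.inl rfl)).symm
      exact deg_two hcl h1 h2 h3 (cinj.ne (ne12 i)) (hcs (i + 1) i) (hcs (i + 2) i)
    rcases Classical.em (∃ i0, IsCl (s i0)) with ⟨i0, hi0⟩ | hno
    · rcases (by omega : k = 3 ∨ k = 4 ∨ 5 ≤ k) with h3 | h4 | h5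
      · subst h3
        have e30 : ∀ i : ZMod 3, i + 2 + 1 = i := by
          intro i
          rw [add_assoc, (show (2 : ZMod 3) + 1 = 0 by decide), add_zero]
        have hna2 : ¬ (Grq r q).Adj (s i0) (c (i0 + 2)) := by
          intro h
          rcases (hsc i0 (i0 + 2)).mp h with h' | h'
          · exact ne2 i0 h'.symm
          · exact ne12 i0 h'.symm
        have A2 := nonadj_struct hi0 (hClc (i0 + 2)) ((hcs (i0 + 2) i0).symm) hna2
        rcases Classical.em (IsCl (s (i0 + 1))) with hs1 | hs1
        · have hnss : ¬ (Grq r q).Adj (s (i0 + 1)) (s i0) := hss (i0 + 1) i0 (ne1 i0).symm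
          have U := nonadj_struct hs1 hi0 (sinj.ne (ne1 i0).symm) hnss
          have hnc0 : ¬ (Grq r q).Adj (s (i0 + 1)) (c i0) := by
            intro h
            rcases (hsc (i0 + 1) i0).mp h with h' | h'
            · exact ne1 i0 h'
            · rw [add_assoc, (show (1 : ZMod 3) + 1 = 2 by decide)] at h'
              exact ne2 i0 h'
          have C0 := nonadj_struct hs1 (hClc i0) ((hcs i0 (i0 + 1)).symm) hnc0
          refine absurd (hcc i0 (i0 + 2) (ne2 i0))
            (cross_nonadj hr hq (hClc i0) (hClc (i0 + 2)) ?_)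
          omega
        · rcases Classical.em (IsCl (s (i0 + 2))) with hs2 | hs2
          · have hnss : ¬ (Grq r q).Adj (s (i0 + 2)) (s i0) := hss (i0 + 2) i0 (ne2 i0).symm
            have U := nonadj_struct hs2 hi0 (sinj.ne (ne2 i0).symm) hnss
            have hnc1 : ¬ (Grq r q).Adj (s (i0 + 2)) (c (i0 + 1)) := by
              intro h
              rcases (hsc (i0 + 2) (i0 + 1)).mp h with h' | h'
              · exact ne12 i0 h'
              · rw [e30 i0] at h'
                exact ne1 i0 h'.symm
            have C1 := nonadj_struct hs2 (hClc (i0 + 1)) ((hcs (i0 + 1) (i0 + 2)).symm) hnc1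
            refine absurd (hcc (i0 + 1) (i0 + 2) (ne12 i0))
              (cross_nonadj hr hq (hClc (i0 + 1)) (hClc (i0 + 2)) ?_)
            omega
          · have h11 : (Grq r q).Adj (s (i0 + 1)) (c (i0 + 1)) := (hsc (i0 + 1) (i0 + 1)).mpr (Or.inl rfl)
            have h12 : (Grq r q).Adj (s (i0 + 1)) (c (i0 + 2)) := (hsc (i0 + 1) (i0 + 2)).mpr (Or.inr (by ring))
            have st1 := (adj_step hs1 h11 h12 (cinj.ne (ne12 i0))).2.2
            have h21 : (Grq r q).Adj (s (i0 + 2)) (c (i0 + 2)) := (hsc (i0 + 2) (i0 + 2)).mpr (Or.inl rfl)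
            have h22 : (Grq r q).Adj (s (i0 + 2)) (c i0) := (hsc (i0 + 2) i0).mpr (Or.inr (e30 i0).symm)
            have st2 := (adj_step hs2 h21 h22 (cinj.ne (ne2 i0).symm)).2.2
            have b0 := nuv_facts (hClc i0)
            have b1 := nuv_facts (hClc (i0 + 1))
            have T01 : nuv r q (c i0) ≠ nuv r q (c (i0 + 1)) :=
              fun h => (ne1 i0) (cinj (nuv_inj (hClc _) (hClc _) h))
            omega
      · subst h4
        have hna2 : ¬ (Grq r q).Adj (s i0) (c (i0 + 2)) := by
          intro h
          rcases (hsc i0 (i0 + 2)).mp h with h' | h'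
          · exact ne2 i0 h'.symm
          · exact ne12 i0 h'.symm
        have ne3 : i0 ≠ i0 + 3 := by
          have h := shift_ne i0 (show (0 : ZMod 4) ≠ 3 by decide)
          simpa using h
        have ne13 : i0 + 1 ≠ i0 + 3 := shift_ne i0 (show (1 : ZMod 4) ≠ 3 by decide)
        have ne23 : i0 + 2 ≠ i0 + 3 := shift_ne i0 (show (2 : ZMod 4) ≠ 3 by decide)
        have hna3 : ¬ (Grq r q).Adj (s i0) (c (i0 + 3)) := by
          intro h
          rcases (hsc i0 (i0 + 3)).mp h with h' | h'
          · exact ne3 h'.symm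
          · exact ne13 h'.symm
        have A2 := nonadj_struct hi0 (hClc (i0 + 2)) ((hcs (i0 + 2) i0).symm) hna2
        have A3 := nonadj_struct hi0 (hClc (i0 + 3)) ((hcs (i0 + 3) i0).symm) hna3
        have T23 : nuv r q (c (i0 + 2)) ≠ nuv r q (c (i0 + 3)) :=
          fun h => ne23 (cinj (nuv_inj (hClc _) (hClc _) h))
        rcases Classical.em (IsCl (s (i0 + 2))) with hs2 | hs2
        · have hnss : ¬ (Grq r q).Adj (s (i0 + 2)) (s i0) := hss (i0 + 2) i0 (ne2 i0).symm
          have U := nonadj_struct hs2 hi0 (sinj.ne (ne2 i0).symm) hnss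
          have U2 : nuv r q (s (i0 + 2)) ≠ nuv r q (c (i0 + 2)) :=
            fun h => hcs (i0 + 2) (i0 + 2) (nuv_inj hs2 (hClc _) h).symm
          have U3 : nuv r q (s (i0 + 2)) ≠ nuv r q (c (i0 + 3)) :=
            fun h => hcs (i0 + 3) (i0 + 2) (nuv_inj hs2 (hClc _) h).symm
          omega
        · have h1 : (Grq r q).Adj (s (i0 + 2)) (c (i0 + 2)) := (hsc (i0 + 2) (i0 + 2)).mpr (Or.inl rfl)
          have h2 : (Grq r q).Adj (s (i0 + 2)) (c (i0 + 3)) := (hsc (i0 + 2) (i0 + 3)).mpr (Or.inr (by ring))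
          have hst := (adj_step hs2 h1 h2 (cinj.ne ne23)).2.2
          omega
      · -- 5 ≤ k
        have hna : ∀ d : ℕ, 2 ≤ d → d < k → ¬ (Grq r q).Adj (s i0) (c (i0 + (d : ZMod k))) := by
          intro d hd2 hdk h
          rcases (hsc i0 (i0 + (d : ZMod k))).mp h with h' | h'
          · have h2 := hsh i0 d 0 hdk (by omega) (by omega)
            simp only [Nat.cast_zero, add_zero] at h2
            exact h2 h'
          · have h2 := hsh i0 d 1 hdk (by omega) (by omega)
            simp only [Nat.cast_one] at h2
            exact h2 h'
        have cr : ∀ d : ℕ, 2 ≤ d → d < k →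
            ((nuv r q (s i0) = 0 ∨ nuv r q (s i0) = r + 1) ∧
              (nuv r q (c (i0 + (d : ZMod k))) = r - 1 ∨ nuv r q (c (i0 + (d : ZMod k))) = r + q)) ∨
            ((nuv r q (c (i0 + (d : ZMod k))) = 0 ∨ nuv r q (c (i0 + (d : ZMod k))) = r + 1) ∧
              (nuv r q (s i0) = r - 1 ∨ nuv r q (s i0) = r + q)) := fun d hd2 hdk =>
          nonadj_struct hi0 (hClc _) ((hcs _ i0).symm) (hna d hd2 hdk)
        have ne_t : ∀ d e : ℕ, d < k → e < k → d ≠ e →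
            nuv r q (c (i0 + (d : ZMod k))) ≠ nuv r q (c (i0 + (e : ZMod k))) :=
          fun d e hd he hde h => (hsh i0 d e hd he hde) (cinj (nuv_inj (hClc _) (hClc _) h))
        have A2 := cr 2 (by omega) (by omega)
        have A3 := cr 3 (by omega) (by omega)
        have A4 := cr 4 (by omega) (by omega)
        have T23 := ne_t 2 3 (by omega) (by omega) (by omega)
        have T24 := ne_t 2 4 (by omega) (by omega) (by omega)
        have T34 := ne_t 3 4 (by omega) (by omega) (by omega)
        omega
    · have hs' : ∀ i, ¬ IsCl (s i) := fun i hi => hno ⟨i, hi⟩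
      have hstep : ∀ i, nuv r q (c (i + 1)) = nuv r q (c i) + 1 ∨
          nuv r q (c i) = nuv r q (c (i + 1)) + 1 := by
        intro i
        have h1 : (Grq r q).Adj (s i) (c (i + 1)) := (hsc i (i + 1)).mpr (Or.inr rfl)
        have h2 : (Grq r q).Adj (s i) (c i) := (hsc i i).mpr (Or.inl rfl)
        exact (adj_step (hs' i) h1 h2 (cinj.ne (ne1 i).symm)).2.2
      exact no_cycle hk (fun i => nuv r q (c i))
        (fun a b h => cinj (nuv_inj (hClc a) (hClc b) h)) hstep


end LeafPaper
end

section
/- Let G = (U ∪̇ V, E) be a bipartite graph with s, t ∈ U, both s and t of degree 2 and sharing no common neighbor, and let H be the graph constructed from (G, s, t) as described. Then H is chordal. -/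
open SimpleGraph

namespace LeafPaper

/-- The vertex type of the graph `H` built from `(G, s, t)`: the four special
vertices `s₁, s₂` (coded `Sum.inl (Sum.inl b)`) and `t₁, t₂` (coded
`Sum.inl (Sum.inr b)`), the copies `X_U` of `U ∖ {s, t}`, and the copies `X_V`
of `V`. -/
abbrev HVert (U V0 : Type) (s t : U) : Type :=
  (Bool ⊕ Bool) ⊕ ({u : U // u ≠ s ∧ u ≠ t} ⊕ V0)

/-- The adjacency relation of `H`: all pairs inside `X_U ∪ {s₁, s₂, t₁, t₂}` are
edges except `s_i t_j`; `u' ∈ X_U` and `v' ∈ X_V` are adjacent iff `uv ∈ E(G)`;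
`s₁ c₁'`, `s₂ c₂'`, `t₁ d₁'`, `t₂ d₂'` are edges; `X_V` is independent. -/
def hRel {U V0 : Type} (G : SimpleGraph (U ⊕ V0)) (s t : U) (c1 c2 d1 d2 : V0) :
    HVert U V0 s t → HVert U V0 s t → Prop
  | Sum.inl (Sum.inl _), Sum.inl (Sum.inl _) => True
  | Sum.inl (Sum.inr _), Sum.inl (Sum.inr _) => True
  | Sum.inl (Sum.inl _), Sum.inl (Sum.inr _) => False
  | Sum.inl (Sum.inr _), Sum.inl (Sum.inl _) => False
  | Sum.inl _, Sum.inr (Sum.inl _) => True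
  | Sum.inr (Sum.inl _), Sum.inl _ => True
  | Sum.inr (Sum.inl _), Sum.inr (Sum.inl _) => True
  | Sum.inr (Sum.inl u), Sum.inr (Sum.inr v) => G.Adj (Sum.inl u.val) (Sum.inr v)
  | Sum.inr (Sum.inr v), Sum.inr (Sum.inl u) => G.Adj (Sum.inl u.val) (Sum.inr v)
  | Sum.inl (Sum.inl b), Sum.inr (Sum.inr v) =>
      (b = false ∧ v = c1) ∨ (b = true ∧ v = c2)
  | Sum.inr (Sum.inr v), Sum.inl (Sum.inl b) =>
      (b = false ∧ v = c1) ∨ (b = true ∧ v = c2)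
  | Sum.inl (Sum.inr b), Sum.inr (Sum.inr v) =>
      (b = false ∧ v = d1) ∨ (b = true ∧ v = d2)
  | Sum.inr (Sum.inr v), Sum.inl (Sum.inr b) =>
      (b = false ∧ v = d1) ∨ (b = true ∧ v = d2)
  | Sum.inr (Sum.inr _), Sum.inr (Sum.inr _) => False

/-- The graph `H` constructed from the bipartite graph `G` on `U ⊕ V`, the two
special vertices `s, t ∈ U` and their neighborhoods `{c₁, c₂}` and `{d₁, d₂}`. -/
def hGraph {U V0 : Type} (G : SimpleGraph (U ⊕ V0)) (s t : U) (c1 c2 d1 d2 : V0) :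
    SimpleGraph (HVert U V0 s t) :=
  SimpleGraph.fromRel (hRel G s t c1 c2 d1 d2)

/-- the graph `H` constructed from a bipartite graph `G` with
`s, t ∈ U` of degree two sharing no common neighbor is chordal. -/
theorem stmt_16 {U V0 : Type} [Fintype U] [Fintype V0]
    (G : SimpleGraph (U ⊕ V0)) (s t : U) (c1 c2 d1 d2 : V0)
    (hbipU : ∀ u u' : U, ¬ G.Adj (Sum.inl u) (Sum.inl u'))
    (hbipV : ∀ v v' : V0, ¬ G.Adj (Sum.inr v) (Sum.inr v'))
    (hst : s ≠ t) (hc : c1 ≠ c2) (hd : d1 ≠ d2)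
    (hNs : ∀ v : V0, G.Adj (Sum.inl s) (Sum.inr v) ↔ (v = c1 ∨ v = c2))
    (hNt : ∀ v : V0, G.Adj (Sum.inl t) (Sum.inr v) ↔ (v = d1 ∨ v = d2))
    (hcommon : ∀ v : V0, ¬ (G.Adj (Sum.inl s) (Sum.inr v) ∧ G.Adj (Sum.inl t) (Sum.inr v))) :
    IsChordal (hGraph G s t c1 c2 d1 d2) := by
  classical
  intro n hn hcyc
  obtain ⟨φ, hinj, hadj⟩ := hcyc
  haveI : NeZero n := ⟨by omega⟩
  have hknz : ∀ k : ℕ, 0 < k → k < n → (k : ZMod n) ≠ 0 := by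
    intro k hk1 hk2 h
    rw [ZMod.natCast_eq_zero_iff] at h
    exact absurd (Nat.le_of_dvd hk1 h) (by omega)
  have h1 : (1 : ZMod n) ≠ 0 := by
    have := hknz 1 (by omega) (by omega); simpa using this
  have h2 : (2 : ZMod n) ≠ 0 := by
    have := hknz 2 (by omega) (by omega); simpa using this
  have h3 : (3 : ZMod n) ≠ 0 := by
    have := hknz 3 (by omega) (by omega); simpa using this
  have ne1 : ∀ i : ZMod n, i ≠ i + 1 := fun i h => h1 (by linear_combination -h)
  have ne2 : ∀ i : ZMod n, i ≠ i + 2 := fun i h => h2 (by linear_combination -h)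
  have ne3 : ∀ i : ZMod n, i ≠ i + 3 := fun i h => h3 (by linear_combination -h)
  have nc2 : ∀ i : ZMod n, ¬(i + 2 = i + 1 ∨ i = (i + 2) + 1) := by
    rintro i (h | h)
    · exact h1 (by linear_combination h)
    · exact h3 (by linear_combination -h)
  have F1 : ∀ i : ZMod n, (hGraph G s t c1 c2 d1 d2).Adj (φ i) (φ (i + 1)) :=
    fun i => (hadj i (i + 1) (ne1 i)).mpr (Or.inl rfl)
  have NotAdj : ∀ i j : ZMod n, i ≠ j → ¬(j = i + 1 ∨ i = j + 1) →
      ¬ (hGraph G s t c1 c2 d1 d2).Adj (φ i) (φ j) :=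
    fun i j h hnc ha => hnc ((hadj i j h).mp ha)
  have φne : ∀ i j : ZMod n, i ≠ j → φ i ≠ φ j := fun i j h hh => h (hinj hh)
  have hAdjTrue : ∀ a b : HVert U V0 s t, a ≠ b → hRel G s t c1 c2 d1 d2 a b →
      (hGraph G s t c1 c2 d1 d2).Adj a b :=
    fun a b hne h => (SimpleGraph.fromRel_adj _ a b).mpr ⟨hne, Or.inl h⟩
  have noVV : ∀ v w : V0,
      ¬ (hGraph G s t c1 c2 d1 d2).Adj (Sum.inr (Sum.inr v)) (Sum.inr (Sum.inr w)) := by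
    intro v w h
    rw [hGraph, SimpleGraph.fromRel_adj] at h
    exact h.2.elim id id
  have hSadj : ∀ (b : Bool) (v : V0),
      (hGraph G s t c1 c2 d1 d2).Adj (Sum.inl (Sum.inl b)) (Sum.inr (Sum.inr v)) →
      G.Adj (Sum.inl s) (Sum.inr v) := by
    intro b v h
    rw [hGraph, SimpleGraph.fromRel_adj] at h
    have h' : (b = false ∧ v = c1) ∨ (b = true ∧ v = c2) := h.2.elim id id
    rcases h' with ⟨-, hv⟩ | ⟨-, hv⟩
    · exact (hNs v).mpr (Or.inl hv)
    · exact (hNs v).mpr (Or.inr hv)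
  have hTadj : ∀ (b : Bool) (v : V0),
      (hGraph G s t c1 c2 d1 d2).Adj (Sum.inl (Sum.inr b)) (Sum.inr (Sum.inr v)) →
      G.Adj (Sum.inl t) (Sum.inr v) := by
    intro b v h
    rw [hGraph, SimpleGraph.fromRel_adj] at h
    have h' : (b = false ∧ v = d1) ∨ (b = true ∧ v = d2) := h.2.elim id id
    rcases h' with ⟨-, hv⟩ | ⟨-, hv⟩
    · exact (hNt v).mpr (Or.inl hv)
    · exact (hNt v).mpr (Or.inr hv)
  -- key lemma: special, X_V, special in a row with the two specials nonconsecutive: impossible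
  have key : ∀ (p : ZMod n) (x y : Bool ⊕ Bool) (v : V0),
      φ p = Sum.inl x → φ (p + 1) = Sum.inr (Sum.inr v) → φ (p + 2) = Sum.inl y → False := by
    intro p x y v hx hv hy
    have hnadj := NotAdj p (p + 2) (ne2 p) (nc2 p)
    have ha1 := F1 p
    have ha2 := F1 (p + 1)
    rw [show p + 1 + 1 = p + 2 by ring] at ha2
    rw [hx, hv] at ha1
    rw [hv, hy] at ha2
    have hnev : φ p ≠ φ (p + 2) := φne _ _ (ne2 p)
    rw [hx, hy] at hnev
    rcases x with b | b <;> rcases y with b' | b'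
    · exact hnadj (by rw [hx, hy]; exact hAdjTrue _ _ hnev trivial)
    · exact hcommon v ⟨hSadj b v ha1, hTadj b' v ha2.symm⟩
    · exact hcommon v ⟨hSadj b' v ha2.symm, hTadj b v ha1⟩
    · exact hnadj (by rw [hx, hy]; exact hAdjTrue _ _ hnev trivial)
  -- an X_U vertex is adjacent to everything except X_V; so nonconsecutive partners are X_V
  have hXV2 : ∀ (p j : ZMod n) (u : {u : U // u ≠ s ∧ u ≠ t}),
      φ p = Sum.inr (Sum.inl u) → p ≠ j → ¬(j = p + 1 ∨ p = j + 1) →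
      ∃ v : V0, φ j = Sum.inr (Sum.inr v) := by
    intro p j u hu hpj hnc
    have hnadj := NotAdj p j hpj hnc
    have hnev := φne p j hpj
    rcases hj : φ j with x | u' | v
    · exfalso
      apply hnadj
      rw [hu, hj] at hnev
      rw [hu, hj]
      exact hAdjTrue _ _ hnev (by cases x <;> trivial)
    · exfalso
      apply hnadj
      rw [hu, hj] at hnev
      rw [hu, hj]
      exact hAdjTrue _ _ hnev trivial
    · exact ⟨v, rfl⟩
  by_cases hXU : ∃ (i : ZMod n) (u : {u : U // u ≠ s ∧ u ≠ t}), φ i = Sum.inr (Sum.inl u)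
  · obtain ⟨i, u, hu⟩ := hXU
    by_cases hn5 : 5 ≤ n
    · have h4 : (4 : ZMod n) ≠ 0 := hknz 4 (by omega) (by omega)
      obtain ⟨v2, hv2⟩ := hXV2 i (i + 2) u hu (ne2 i) (nc2 i)
      obtain ⟨v3, hv3⟩ := hXV2 i (i + 3) u hu (ne3 i) (by
        rintro (h | h)
        · exact h2 (by linear_combination h)
        · exact h4 (by linear_combination -h))
      have := F1 (i + 2)
      rw [show i + 2 + 1 = i + 3 by ring, hv2, hv3] at this
      exact noVV _ _ this
    · have hn4 : n = 4 := by omega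
      subst hn4
      obtain ⟨v2, hv2⟩ := hXV2 i (i + 2) u hu (ne2 i) (nc2 i)
      have hsp1 : ∃ x, φ (i + 1) = Sum.inl x := by
        rcases h' : φ (i + 1) with x | u' | w
        · exact ⟨x, rfl⟩
        · exfalso
          obtain ⟨v3, hv3⟩ := hXV2 (i + 1) (i + 3) u' h'
            (fun h => h2 (by linear_combination -h)) (by
              rintro (h | h)
              · exact h1 (by linear_combination h)
              · exact h3 (by linear_combination -h))
          have := F1 (i + 2)
          rw [show i + 2 + 1 = i + 3 by ring, hv2, hv3] at this
          exact noVV _ _ this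
        · exfalso
          have := F1 (i + 1)
          rw [show i + 1 + 1 = i + 2 by ring, h', hv2] at this
          exact noVV _ _ this
      have hsp3 : ∃ y, φ (i + 3) = Sum.inl y := by
        rcases h' : φ (i + 3) with y | u' | w
        · exact ⟨y, rfl⟩
        · exfalso
          obtain ⟨v1, hv1⟩ := hXV2 (i + 3) (i + 1) u' h'
            (fun h => h2 (by linear_combination h)) (by
              rintro (h | h)
              · exact h3 (by linear_combination -h)
              · exact h1 (by linear_combination h))
          obtain ⟨x, hx⟩ := hsp1
          rw [hx] at hv1
          exact absurd hv1 (by simp)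
        · exfalso
          have := F1 (i + 2)
          rw [show i + 2 + 1 = i + 3 by ring, hv2, h'] at this
          exact noVV _ _ this
      obtain ⟨x, hx⟩ := hsp1
      obtain ⟨y, hy⟩ := hsp3
      exact key (i + 1) x y v2 hx
        (by rw [show i + 1 + 1 = i + 2 by ring]; exact hv2)
        (by rw [show i + 1 + 2 = i + 3 by ring]; exact hy)
  · push_neg at hXU
    by_cases hXV : ∃ (i : ZMod n) (v : V0), φ i = Sum.inr (Sum.inr v)
    · obtain ⟨i, v, hv⟩ := hXV
      have e1 : i - 1 + 1 = i := by ring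
      have hsp0 : ∃ x, φ (i - 1) = Sum.inl x := by
        rcases h' : φ (i - 1) with x | u' | w
        · exact ⟨x, rfl⟩
        · exact absurd h' (hXU _ _)
        · exfalso
          have := F1 (i - 1)
          rw [e1, h', hv] at this
          exact noVV _ _ this
      have hsp2 : ∃ y, φ (i + 1) = Sum.inl y := by
        rcases h' : φ (i + 1) with y | u' | w
        · exact ⟨y, rfl⟩
        · exact absurd h' (hXU _ _)
        · exfalso
          have := F1 i
          rw [hv, h'] at this
          exact noVV _ _ this
      obtain ⟨x, hx⟩ := hsp0
      obtain ⟨y, hy⟩ := hsp2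
      exact key (i - 1) x y v hx (by rw [e1]; exact hv)
        (by rw [show i - 1 + 2 = i + 1 by ring]; exact hy)
    · push_neg at hXV
      have hall : ∀ i : ZMod n, ∃ x : Bool ⊕ Bool, φ i = Sum.inl x := by
        intro i
        rcases h' : φ i with x | u' | w
        · exact ⟨x, rfl⟩
        · exact absurd h' (hXU _ _)
        · exact absurd h' (hXV _ _)
      have hstepS : ∀ (i : ZMod n) (b : Bool), φ i = Sum.inl (Sum.inl b) →
          ∃ b', φ (i + 1) = Sum.inl (Sum.inl b') := by
        intro i b hb
        obtain ⟨x, hx⟩ := hall (i + 1)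
        rcases x with b' | b'
        · exact ⟨b', hx⟩
        · exfalso
          have := F1 i
          rw [hb, hx] at this
          rw [hGraph, SimpleGraph.fromRel_adj] at this
          exact this.2.elim id id
      have hstepT : ∀ (i : ZMod n) (b : Bool), φ i = Sum.inl (Sum.inr b) →
          ∃ b', φ (i + 1) = Sum.inl (Sum.inr b') := by
        intro i b hb
        obtain ⟨x, hx⟩ := hall (i + 1)
        rcases x with b' | b'
        · exfalso
          have := F1 i
          rw [hb, hx] at this
          rw [hGraph, SimpleGraph.fromRel_adj] at this
          exact this.2.elim id id
        · exact ⟨b', hx⟩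
      have h02 : (0 : ZMod n) ≠ 0 + 1 + 1 := fun h => h2 (by linear_combination -h)
      obtain ⟨x0, h0⟩ := hall 0
      rcases x0 with b0 | b0
      · obtain ⟨b1, hb1⟩ := hstepS 0 b0 h0
        obtain ⟨b2, hb2⟩ := hstepS (0 + 1) b1 hb1
        have d01 : b0 ≠ b1 := by
          have := φne 0 (0 + 1) (ne1 0); rw [h0, hb1] at this
          exact fun hb => this (by rw [hb])
        have d02 : b0 ≠ b2 := by
          have := φne 0 (0 + 1 + 1) h02; rw [h0, hb2] at this
          exact fun hb => this (by rw [hb])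
        have d12 : b1 ≠ b2 := by
          have := φne (0 + 1) (0 + 1 + 1) (ne1 (0 + 1)); rw [hb1, hb2] at this
          exact fun hb => this (by rw [hb])
        cases b0 <;> cases b1 <;> cases b2 <;>
          first | exact d01 rfl | exact d02 rfl | exact d12 rfl
      · obtain ⟨b1, hb1⟩ := hstepT 0 b0 h0
        obtain ⟨b2, hb2⟩ := hstepT (0 + 1) b1 hb1
        have d01 : b0 ≠ b1 := by
          have := φne 0 (0 + 1) (ne1 0); rw [h0, hb1] at this
          exact fun hb => this (by rw [hb])
        have d02 : b0 ≠ b2 := by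
          have := φne 0 (0 + 1 + 1) h02; rw [h0, hb2] at this
          exact fun hb => this (by rw [hb])
        have d12 : b1 ≠ b2 := by
          have := φne (0 + 1) (0 + 1 + 1) (ne1 (0 + 1)); rw [hb1, hb2] at this
          exact fun hb => this (by rw [hb])
        cases b0 <;> cases b1 <;> cases b2 <;>
          first | exact d01 rfl | exact d02 rfl | exact d12 rfl

end LeafPaper
end
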